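/- arXiv:1801.02889 — 11 statements merged into one kernel-verified Lean document; each statement's English description precedes it below -/
import Mathlib

section
/- If Z* is a JAM-feasible matrix attaining JAM*(U,Λ,d), and A* is defined by A* s c = 1 if Z* s c > 0 and A* s c = 0 otherwise, then A* is an allocation in 𝒜 and M(A*,Λ) = JAM*(U,Λ,d); in particular A* attains sup_{A ∈ 𝒜} M(A,Λ). -/
open scoped Classical

/-- `Z` is a feasible matrix for the relaxed joint allocation-matching problem. -/
def JAMFeasible {n m : ℕ} (U : Fin n → ℝ) (Λ : Fin m → ℝ) (d : Fin n → ℕ)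
    (Z : Fin n → Fin m → ℝ) : Prop :=
  (∀ s c, 0 ≤ Z s c) ∧
  (∀ s, ∑ c, Z s c ≤ U s) ∧
  (∀ c, ∑ s, Z s c ≤ Λ c) ∧
  (∀ s, (Finset.univ.filter fun c => 0 < Z s c).card ≤ d s)

/-- Optimal value `JAM*(U,Λ,d)` of the relaxed matrix problem. -/
noncomputable def JAMstar {n m : ℕ} (U : Fin n → ℝ) (Λ : Fin m → ℝ) (d : Fin n → ℕ) : ℝ :=
  sSup {v : ℝ | ∃ Z, JAMFeasible U Λ d Z ∧ v = ∑ s, ∑ c, Z s c}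

/-- `A` is a binary allocation respecting the cache sizes `d`. -/
def IsAllocation {n m : ℕ} (d : Fin n → ℕ) (A : Fin n → Fin m → ℕ) : Prop :=
  (∀ s c, A s c = 0 ∨ A s c = 1) ∧ (∀ s, ∑ c, A s c ≤ d s)

/-- `B` is a feasible matching for the allocation `A`. -/
def MatchFeasible {n m : ℕ} (U : Fin n → ℝ) (Λ : Fin m → ℝ) (A : Fin n → Fin m → ℕ)
    (B : Fin n → Fin m → ℝ) : Prop :=
  (∀ s c, 0 ≤ B s c) ∧
  (∀ s, ∑ c, B s c ≤ U s) ∧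
  (∀ c, ∑ s, B s c ≤ Λ c) ∧
  (∀ s c, 0 < B s c → A s c = 1)

/-- `M(A,Λ)`: optimal matched flow under allocation `A`. -/
noncomputable def Mval {n m : ℕ} (U : Fin n → ℝ) (Λ : Fin m → ℝ) (A : Fin n → Fin m → ℕ) : ℝ :=
  sSup {v : ℝ | ∃ B, MatchFeasible U Λ A B ∧ v = ∑ s, ∑ c, B s c}

lemma jam_bdd {n m : ℕ} (U : Fin n → ℝ) (Λ : Fin m → ℝ) (d : Fin n → ℕ) :
    ∀ v ∈ {v : ℝ | ∃ Z, JAMFeasible U Λ d Z ∧ v = ∑ s, ∑ c, Z s c}, v ≤ ∑ s, U s := by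
  rintro v ⟨Z, ⟨_, h2, _, _⟩, rfl⟩
  exact Finset.sum_le_sum fun s _ => h2 s

lemma match_to_jam {n m : ℕ} (U : Fin n → ℝ) (Λ : Fin m → ℝ) (d : Fin n → ℕ)
    (A : Fin n → Fin m → ℕ) (hA : IsAllocation d A)
    (B : Fin n → Fin m → ℝ) (hB : MatchFeasible U Λ A B) : JAMFeasible U Λ d B := by
  obtain ⟨h1, h2, h3, h4⟩ := hB
  refine ⟨h1, h2, h3, fun s => ?_⟩
  calc (Finset.univ.filter fun c => 0 < B s c).card
      ≤ (Finset.univ.filter fun c => A s c = 1).card := by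
        apply Finset.card_le_card
        intro c hc
        simp only [Finset.mem_filter, Finset.mem_univ, true_and] at *
        exact h4 s c hc
    _ ≤ ∑ c, A s c := by
        rw [Finset.card_filter]
        apply Finset.sum_le_sum
        intro c _
        split <;> simp_all
    _ ≤ d s := hA.2 s

lemma match_zero {n m : ℕ} (U : Fin n → ℝ) (hU : ∀ s, 0 ≤ U s)
    (Λ : Fin m → ℝ) (hΛ : ∀ c, 0 ≤ Λ c) (A : Fin n → Fin m → ℕ) :
    MatchFeasible U Λ A (fun _ _ => 0) :=
  ⟨fun _ _ => le_refl 0, fun s => by simpa using hU s, fun c => by simpa using hΛ c,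
    fun s c h => absurd h (lt_irrefl 0)⟩

lemma mval_le_jam {n m : ℕ} (U : Fin n → ℝ) (hU : ∀ s, 0 ≤ U s)
    (Λ : Fin m → ℝ) (hΛ : ∀ c, 0 ≤ Λ c) (d : Fin n → ℕ)
    (A : Fin n → Fin m → ℕ) (hA : IsAllocation d A) :
    Mval U Λ A ≤ JAMstar U Λ d := by
  apply csSup_le
  · exact ⟨0, fun _ _ => 0, match_zero U hU Λ hΛ A, by simp⟩
  · rintro v ⟨B, hB, rfl⟩
    apply le_csSup ⟨∑ s, U s, jam_bdd U Λ d⟩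
    exact ⟨B, match_to_jam U Λ d A hA B hB, rfl⟩

/-- if `Z*` attains `JAM*(U,Λ,d)` and `A* s c = 1 ↔ Z* s c > 0`, then `A*`
is an allocation with `M(A*,Λ) = JAM*(U,Λ,d)`, attaining `sup_{A ∈ 𝒜} M(A,Λ)`. -/
theorem optimal_allocation_from_relaxation {n m : ℕ} (hn : 0 < n) (hm : 0 < m)
    (U : Fin n → ℝ) (hU : ∀ s, 0 ≤ U s)
    (Λ : Fin m → ℝ) (hΛ : ∀ c, 0 ≤ Λ c)
    (d : Fin n → ℕ)
    (Zstar : Fin n → Fin m → ℝ) (hZ : JAMFeasible U Λ d Zstar)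
    (hZopt : ∑ s, ∑ c, Zstar s c = JAMstar U Λ d)
    (Astar : Fin n → Fin m → ℕ)
    (hA : ∀ s c, Astar s c = if 0 < Zstar s c then 1 else 0) :
    IsAllocation d Astar ∧ Mval U Λ Astar = JAMstar U Λ d ∧
      Mval U Λ Astar = sSup {v : ℝ | ∃ A, IsAllocation d A ∧ v = Mval U Λ A} := by
  obtain ⟨hZ1, hZ2, hZ3, hZ4⟩ := hZ
  have hAalloc : IsAllocation d Astar := by
    constructor
    · intro s c; rw [hA s c]; split <;> simp
    · intro s
      calc ∑ c, Astar s c = (Finset.univ.filter fun c => 0 < Zstar s c).card := by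
            rw [Finset.card_filter]
            apply Finset.sum_congr rfl
            intro c _
            rw [hA s c]
        _ ≤ d s := hZ4 s
  have hZmatch : MatchFeasible U Λ Astar Zstar := by
    refine ⟨hZ1, hZ2, hZ3, fun s c h => ?_⟩
    rw [hA s c]; simp [h]
  have hge : JAMstar U Λ d ≤ Mval U Λ Astar := by
    rw [← hZopt]
    apply le_csSup
    · refine ⟨∑ s, U s, ?_⟩
      rintro v ⟨B, hB, rfl⟩
      exact jam_bdd U Λ d _ ⟨B, match_to_jam U Λ d Astar hAalloc B hB, rfl⟩
    · exact ⟨Zstar, hZmatch, rfl⟩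
  have heq : Mval U Λ Astar = JAMstar U Λ d :=
    le_antisymm (mval_le_jam U hU Λ hΛ d Astar hAalloc) hge
  refine ⟨hAalloc, heq, ?_⟩
  apply le_antisymm
  · apply le_csSup
    · refine ⟨JAMstar U Λ d, ?_⟩
      rintro v ⟨A, hAl, rfl⟩
      exact mval_le_jam U hU Λ hΛ d A hAl
    · exact ⟨Astar, hAalloc, rfl⟩
  · refine csSup_le ⟨Mval U Λ Astar, Astar, hAalloc, rfl⟩ ?_
    rintro v ⟨A, hAl, rfl⟩
    rw [heq]
    exact mval_le_jam U hU Λ hΛ d A hAl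
end

section
/- Reduction from 3-partition: let n ≥ 1, L > 0, and size : Fin (3n) → ℝ with size g > 0 for all g and ∑_g size g = n·L. Consider the JAM instance with n servers, each with bandwidth U s = L and cache size d s = 3, and m = 3n contents with rates Λ c = size c. Then JAM*(U,Λ,d) = n·L if and only if there exists a partition of Fin (3n) into n pairwise disjoint sets G_1,…,G_n, each of cardinality 3, such that ∑_{g ∈ G_k} size g = L for every k. -/
open scoped Classical

lemma jam_attained {n m : ℕ} (U : Fin n → ℝ) (Λ : Fin m → ℝ) (d : Fin n → ℕ)
    (hU : ∀ s, 0 ≤ U s) (hΛ : ∀ c, 0 ≤ Λ c) :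
    ∃ Z, JAMFeasible U Λ d Z ∧
      ∀ W, JAMFeasible U Λ d W → ∑ s, ∑ c, W s c ≤ ∑ s, ∑ c, Z s c := by
  classical
  set F : Set (Fin n → Fin m → ℝ) := {Z | JAMFeasible U Λ d Z} with hFdef
  let ι := {S : Fin n → Finset (Fin m) // ∀ s, (S s).card ≤ d s}
  let C : ι → Set (Fin n → Fin m → ℝ) := fun S =>
    {Z | (∀ s c, 0 ≤ Z s c) ∧ (∀ s, ∑ c, Z s c ≤ U s) ∧ (∀ c, ∑ s, Z s c ≤ Λ c) ∧
      ∀ s c, c ∉ S.1 s → Z s c = 0}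
  have heval : ∀ (s : Fin n) (c : Fin m), Continuous fun Z : Fin n → Fin m → ℝ => Z s c :=
    fun s c => (continuous_apply c).comp (continuous_apply s)
  have hFU : F = ⋃ S : ι, C S := by
    ext Z
    constructor
    · rintro ⟨h0, hr, hc, hcard⟩
      refine Set.mem_iUnion.mpr ⟨⟨fun s => Finset.univ.filter fun c => 0 < Z s c, hcard⟩,
        h0, hr, hc, fun s c hc' => ?_⟩
      simp only [Finset.mem_filter, Finset.mem_univ, true_and] at hc'
      exact le_antisymm (not_lt.mp hc') (h0 s c)
    · intro hZ
      obtain ⟨S, h0, hr, hc, hz⟩ := Set.mem_iUnion.mp hZ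
      refine ⟨h0, hr, hc, fun s => le_trans (Finset.card_le_card ?_) (S.2 s)⟩
      intro c hc'
      simp only [Finset.mem_filter, Finset.mem_univ, true_and] at hc'
      by_contra h
      exact absurd (hz s c h) (ne_of_gt hc')
  have hCcpt : ∀ S : ι, IsCompact (C S) := by
    intro S
    have hclosed : IsClosed (C S) := by
      have hrepr : C S = (⋂ s, ⋂ c, {Z : Fin n → Fin m → ℝ | 0 ≤ Z s c}) ∩
          ((⋂ s, {Z : Fin n → Fin m → ℝ | ∑ c, Z s c ≤ U s}) ∩
          ((⋂ c, {Z : Fin n → Fin m → ℝ | ∑ s, Z s c ≤ Λ c}) ∩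
          (⋂ s, ⋂ c, ⋂ _ : c ∉ S.1 s, {Z : Fin n → Fin m → ℝ | Z s c = 0}))) := by
        ext Z
        simp only [C, Set.mem_setOf_eq, Set.mem_inter_iff, Set.mem_iInter]
      rw [hrepr]
      refine IsClosed.inter ?_ (IsClosed.inter ?_ (IsClosed.inter ?_ ?_))
      · exact isClosed_iInter fun s => isClosed_iInter fun c =>
          isClosed_le continuous_const (heval s c)
      · exact isClosed_iInter fun s =>
          isClosed_le (continuous_finset_sum _ fun c _ => heval s c) continuous_const
      · exact isClosed_iInter fun c =>
          isClosed_le (continuous_finset_sum _ fun s _ => heval s c) continuous_const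
      · exact isClosed_iInter fun s => isClosed_iInter fun c => isClosed_iInter fun _ =>
          isClosed_eq (heval s c) continuous_const
    have hbox : IsCompact (Set.pi Set.univ fun s : Fin n =>
        Set.pi Set.univ fun _ : Fin m => Set.Icc (0:ℝ) (U s)) :=
      isCompact_univ_pi fun s => isCompact_univ_pi fun _ => isCompact_Icc
    refine hbox.of_isClosed_subset hclosed ?_
    intro Z hZ
    obtain ⟨h0, hr, _, _⟩ := hZ
    refine Set.mem_univ_pi.mpr fun s => Set.mem_univ_pi.mpr fun c => ⟨h0 s c, ?_⟩
    calc Z s c ≤ ∑ c', Z s c' :=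
          Finset.single_le_sum (fun c' _ => h0 s c') (Finset.mem_univ c)
      _ ≤ U s := hr s
  have hFcpt : IsCompact F := by
    rw [hFU]; exact isCompact_iUnion fun S => hCcpt S
  have h0F : (0 : Fin n → Fin m → ℝ) ∈ F := by
    refine ⟨fun s c => le_refl 0, ?_, ?_, ?_⟩ <;> simp [hU, hΛ]
  have hcont : Continuous fun Z : Fin n → Fin m → ℝ => ∑ s, ∑ c, Z s c :=
    continuous_finset_sum _ fun s _ => continuous_finset_sum _ fun c _ => heval s c
  obtain ⟨Z, hZF, hmax⟩ := hFcpt.exists_isMaxOn ⟨0, h0F⟩ hcont.continuousOn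
  exact ⟨Z, hZF, fun W hW => hmax hW⟩

/-- reduction from the 3-partition problem.  For the JAM instance with `n`
servers of bandwidth `L` and cache size `3`, and `3n` contents with rates `size`,
the optimal value equals `n·L` iff a 3-partition of `size` with common sum `L` exists. -/
theorem jam_three_partition (n : ℕ) (hn : 1 ≤ n) (L : ℝ) (hL : 0 < L)
    (size : Fin (3 * n) → ℝ) (hpos : ∀ g, 0 < size g)
    (hsum : ∑ g, size g = n * L) :
    JAMstar (fun _ : Fin n => L) size (fun _ : Fin n => 3) = n * L ↔
      ∃ G : Fin n → Finset (Fin (3 * n)),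
        (∀ k l, k ≠ l → Disjoint (G k) (G l)) ∧
        (∀ g, ∃ k, g ∈ G k) ∧
        (∀ k, (G k).card = 3) ∧
        (∀ k, ∑ g ∈ G k, size g = L) := by
  classical
  set V : Set ℝ := {v : ℝ | ∃ Z, JAMFeasible (fun _ : Fin n => L) size (fun _ : Fin n => 3) Z ∧
    v = ∑ s, ∑ c, Z s c} with hVdef
  have hLsum : ∑ _s : Fin n, L = n * L := by
    simp [Finset.sum_const, nsmul_eq_mul]
  have hub : ∀ v ∈ V, v ≤ n * L := by
    rintro v ⟨Z, ⟨h0, hr, hc, hcard⟩, rfl⟩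
    calc ∑ s, ∑ c, Z s c ≤ ∑ _s : Fin n, L := Finset.sum_le_sum fun s _ => hr s
      _ = n * L := hLsum
  have hstar : JAMstar (fun _ : Fin n => L) size (fun _ : Fin n => 3) = sSup V := rfl
  constructor
  · intro h
    obtain ⟨Z, hZfeas, hZmax⟩ := jam_attained (fun _ : Fin n => L) size (fun _ : Fin n => 3)
      (fun _ => hL.le) (fun c => (hpos c).le)
    have hmem : (∑ s, ∑ c, Z s c) ∈ V := ⟨Z, hZfeas, rfl⟩
    have hsupval : sSup V = ∑ s, ∑ c, Z s c := by
      apply le_antisymm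
      · exact csSup_le ⟨_, hmem⟩ (by rintro v ⟨W, hW, rfl⟩; exact hZmax W hW)
      · exact le_csSup ⟨n * L, hub⟩ hmem
    have htot : ∑ s, ∑ c, Z s c = n * L := by
      rw [← hsupval, ← hstar]; exact h
    obtain ⟨h0, hr, hc, hcard⟩ := hZfeas
    have hrow : ∀ s, ∑ c, Z s c = L := by
      have h1 : ∑ s, ∑ c, Z s c = ∑ _s : Fin n, L := by rw [htot, hLsum]
      have := (Finset.sum_eq_sum_iff_of_le (fun s _ => hr s)).mp h1
      exact fun s => this s (Finset.mem_univ s)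
    have hcol : ∀ c, ∑ s, Z s c = size c := by
      have h1 : ∑ c, ∑ s, Z s c = ∑ c, size c := by
        rw [Finset.sum_comm, htot, hsum]
      have := (Finset.sum_eq_sum_iff_of_le (fun c _ => hc c)).mp h1
      exact fun c => this c (Finset.mem_univ c)
    set P : Fin n → Finset (Fin (3 * n)) :=
      fun s => Finset.univ.filter fun c => 0 < Z s c with hPdef
    set Q : Fin (3 * n) → Finset (Fin n) :=
      fun c => Finset.univ.filter fun s => 0 < Z s c with hQdef
    have hQ1 : ∀ c, 1 ≤ (Q c).card := by
      intro c
      refine Finset.card_pos.mpr ?_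
      by_contra hne
      rw [Finset.not_nonempty_iff_eq_empty, Finset.filter_eq_empty_iff] at hne
      have hle : ∑ s, Z s c ≤ 0 :=
        Finset.sum_nonpos fun s _ => not_lt.mp (hne (Finset.mem_univ s))
      have := hcol c
      have := hpos c
      linarith
    have htrans : ∑ s, (P s).card = ∑ c, (Q c).card := by
      simp only [hPdef, hQdef, Finset.card_filter]
      exact Finset.sum_comm
    have hQsum : ∑ c, (Q c).card = 3 * n := by
      have hle : ∑ c, (Q c).card ≤ 3 * n := by
        rw [← htrans]
        calc ∑ s, (P s).card ≤ ∑ _s : Fin n, 3 := Finset.sum_le_sum fun s _ => hcard s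
          _ = 3 * n := by simp [Finset.sum_const, mul_comm]
      have hge : 3 * n ≤ ∑ c, (Q c).card := by
        calc 3 * n = ∑ _c : Fin (3 * n), 1 := by simp
          _ ≤ ∑ c, (Q c).card := Finset.sum_le_sum fun c _ => hQ1 c
      omega
    have hQcard : ∀ c, (Q c).card = 1 := by
      have h1 : ∑ _c : Fin (3 * n), 1 = ∑ c, (Q c).card := by rw [hQsum]; simp
      have := (Finset.sum_eq_sum_iff_of_le (fun c _ => hQ1 c)).mp h1
      exact fun c => ((this c (Finset.mem_univ c)).symm)
    have hPcard : ∀ s, (P s).card = 3 := by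
      have h1 : ∑ s, (P s).card = ∑ _s : Fin n, 3 := by
        rw [htrans, hQsum]; simp [Finset.sum_const, mul_comm]
      have := (Finset.sum_eq_sum_iff_of_le (fun s _ => hcard s)).mp h1
      exact fun s => this s (Finset.mem_univ s)
    have hQsingle : ∀ {k g}, g ∈ P k → Q g = {k} := by
      intro k g hg
      have hk : k ∈ Q g := by
        simp only [hQdef, Finset.mem_filter, Finset.mem_univ, true_and]
        exact (Finset.mem_filter.mp hg).2
      obtain ⟨a, ha⟩ := Finset.card_eq_one.mp (hQcard g)
      rw [ha] at hk ⊢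
      rw [Finset.mem_singleton] at hk
      rw [hk]
    refine ⟨P, ?_, ?_, hPcard, ?_⟩
    · intro k l hkl
      rw [Finset.disjoint_left]
      intro g hgk hgl
      have h1 := hQsingle hgk
      have h2 := hQsingle hgl
      rw [h1] at h2
      exact hkl (Finset.singleton_injective h2)
    · intro g
      obtain ⟨k, hk⟩ := Finset.card_pos.mp (hQ1 g)
      refine ⟨k, ?_⟩
      simp only [hPdef, Finset.mem_filter, Finset.mem_univ, true_and]
      exact (Finset.mem_filter.mp hk).2
    · intro k
      have hz : ∀ g ∈ P k, Z k g = size g := by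
        intro g hg
        have hQg := hQsingle hg
        have hsingle : ∑ s, Z s g = Z k g := by
          refine Finset.sum_eq_single k (fun s _ hs => ?_)
            (fun h => absurd (Finset.mem_univ k) h)
          by_contra hne
          have hsQ : s ∈ Q g := by
            simp only [hQdef, Finset.mem_filter, Finset.mem_univ, true_and]
            exact lt_of_le_of_ne (h0 s g) (Ne.symm hne)
          rw [hQg, Finset.mem_singleton] at hsQ
          exact hs hsQ
        rw [← hsingle]
        exact hcol g
      calc ∑ g ∈ P k, size g = ∑ g ∈ P k, Z k g :=
            Finset.sum_congr rfl fun g hg => (hz g hg).symm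
        _ = ∑ g, Z k g := by
            refine Finset.sum_subset (Finset.subset_univ _) fun g _ hg => ?_
            have : ¬ 0 < Z k g := by
              simpa only [hPdef, Finset.mem_filter, Finset.mem_univ, true_and] using hg
            exact le_antisymm (not_lt.mp this) (h0 k g)
        _ = L := hrow k
  · rintro ⟨G, hdisj, hcover, hGcard, hGsum⟩
    set Z : Fin n → Fin (3 * n) → ℝ := fun s c => if c ∈ G s then size c else 0 with hZdef
    have hrowZ : ∀ s, ∑ c, Z s c = L := by
      intro s
      have : ∑ c, Z s c = ∑ c ∈ G s, size c := by
        simp only [hZdef]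
        rw [Finset.sum_ite_mem, Finset.univ_inter]
      rw [this, hGsum s]
    have hfeas : JAMFeasible (fun _ : Fin n => L) size (fun _ : Fin n => 3) Z := by
      refine ⟨fun s c => ?_, fun s => (hrowZ s).le, fun c => ?_, fun s => ?_⟩
      · simp only [hZdef]
        split
        · exact (hpos c).le
        · exact le_refl 0
      · obtain ⟨k, hk⟩ := hcover c
        have : ∑ s, Z s c = size c := by
          refine (Finset.sum_eq_single k (fun s _ hs => ?_)
            (fun h => absurd (Finset.mem_univ k) h)).trans ?_
          · simp only [hZdef]
            rw [if_neg]
            intro hc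
            exact Finset.disjoint_left.mp (hdisj s k hs) hc hk
          · simp only [hZdef]
            rw [if_pos hk]
        exact this.le
      · have : (Finset.univ.filter fun c => 0 < Z s c) = G s := by
          ext c
          simp only [Finset.mem_filter, Finset.mem_univ, true_and, hZdef]
          constructor
          · intro h
            by_contra hc
            rw [if_neg hc] at h
            exact lt_irrefl 0 h
          · intro h
            rw [if_pos h]
            exact hpos c
        rw [this, hGcard s]
    have htot : ∑ s, ∑ c, Z s c = n * L := by
      rw [Finset.sum_congr rfl fun s _ => hrowZ s, hLsum]
    have hmem : (n * L : ℝ) ∈ V := ⟨Z, hfeas, htot.symm⟩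
    rw [hstar]
    exact le_antisymm (csSup_le ⟨_, hmem⟩ hub) (le_csSup ⟨n * L, hub⟩ hmem)
end

section
/- Structural lemma for the 3-partition reduction: let n ≥ 1, L > 0, and size : Fin (3n) → ℝ with size g > 0 for all g and ∑_g size g = n·L. Consider the JAM instance with n servers, each with bandwidth U s = L and cache size d s = 3, and m = 3n contents with rates Λ c = size c. If Z is JAM-feasible with ∑_{s,c} Z s c = n·L, then: for every server s, ∑_c Z s c = L and there are exactly 3 contents c with Z s c > 0; and for every content c, ∑_s Z s c = size c and there is exactly one server s with Z s c > 0. -/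
open scoped Classical

/-- structural lemma for the 3-partition reduction.  If a feasible `Z` for the
3-partition JAM instance has total flow `n·L`, then each server serves total flow exactly
`L` split over exactly `3` contents, and each content `c` has its full rate `size c` served
by exactly one server. -/
theorem jam_three_partition_structure (n : ℕ) (hn : 1 ≤ n) (L : ℝ) (hL : 0 < L)
    (size : Fin (3 * n) → ℝ) (hpos : ∀ g, 0 < size g)
    (hsum : ∑ g, size g = n * L)
    (Z : Fin n → Fin (3 * n) → ℝ)
    (hZ : JAMFeasible (fun _ : Fin n => L) size (fun _ : Fin n => 3) Z)
    (htot : ∑ s, ∑ c, Z s c = n * L) :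
    (∀ s, ∑ c, Z s c = L ∧ (Finset.univ.filter fun c => 0 < Z s c).card = 3) ∧
    (∀ c, ∑ s, Z s c = size c ∧ ∃! s, 0 < Z s c) := by
  obtain ⟨hnn, hrow, hcol, hcard⟩ := hZ
  -- row sums equal L
  have hrowsum : ∀ s, ∑ c, Z s c = L := by
    intro s
    by_contra h
    have hlt : ∑ c, Z s c < L := lt_of_le_of_ne (hrow s) h
    have hs : ∑ s, ∑ c, Z s c < ∑ _s : Fin n, L :=
      Finset.sum_lt_sum (fun i _ => hrow i) ⟨s, Finset.mem_univ s, hlt⟩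
    rw [htot, Finset.sum_const, Finset.card_univ, Fintype.card_fin,
      nsmul_eq_mul] at hs
    exact lt_irrefl _ hs
  -- column sums equal size c
  have hcolsum : ∀ c, ∑ s, Z s c = size c := by
    intro c
    by_contra h
    have hlt : ∑ s, Z s c < size c := lt_of_le_of_ne (hcol c) h
    have hs : ∑ c, ∑ s, Z s c < ∑ c, size c :=
      Finset.sum_lt_sum (fun i _ => hcol i) ⟨c, Finset.mem_univ c, hlt⟩
    rw [Finset.sum_comm, htot, hsum] at hs
    exact lt_irrefl _ hs
  -- counting positive entries
  set f : Fin n → ℕ := fun s => (Finset.univ.filter fun c => 0 < Z s c).card with hf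
  set g : Fin (3 * n) → ℕ := fun c => (Finset.univ.filter fun s => 0 < Z s c).card with hg
  have hfg : ∑ s, f s = ∑ c, g c := by
    simp only [hf, hg, Finset.card_filter]
    exact Finset.sum_comm
  have hg1 : ∀ c, 1 ≤ g c := by
    intro c
    have hpos' : 0 < ∑ s, Z s c := by rw [hcolsum c]; exact hpos c
    obtain ⟨s, -, hs⟩ := Finset.exists_lt_of_sum_lt (by simpa using hpos' :
      ∑ _s : Fin n, (0:ℝ) < ∑ s, Z s c)
    exact Finset.card_pos.mpr ⟨s, Finset.mem_filter.mpr ⟨Finset.mem_univ s, hs⟩⟩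
  have hfle : ∀ s, f s ≤ 3 := fun s => hcard s
  have hsumf : ∑ s, f s ≤ 3 * n := by
    calc ∑ s, f s ≤ ∑ _s : Fin n, 3 := Finset.sum_le_sum fun i _ => hfle i
    _ = 3 * n := by simp [mul_comm]
  have hsumg : 3 * n ≤ ∑ c, g c := by
    calc (3 * n : ℕ) = ∑ _c : Fin (3 * n), 1 := by simp
    _ ≤ ∑ c, g c := Finset.sum_le_sum fun i _ => hg1 i
  have hfeq : ∑ s, f s = 3 * n := le_antisymm hsumf (hfg ▸ hsumg)
  have hgeq : ∑ c, g c = 3 * n := hfg ▸ hfeq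
  have hf3 : ∀ s, f s = 3 := by
    intro s
    by_contra h
    have hlt : f s < 3 := lt_of_le_of_ne (hfle s) h
    have : ∑ s, f s < ∑ _s : Fin n, 3 :=
      Finset.sum_lt_sum (fun i _ => hfle i) ⟨s, Finset.mem_univ s, hlt⟩
    rw [hfeq] at this
    simp [mul_comm] at this
  have hg1' : ∀ c, g c = 1 := by
    intro c
    by_contra h
    have hlt : 1 < g c := lt_of_le_of_ne (hg1 c) (Ne.symm h)
    have : ∑ _c : Fin (3 * n), 1 < ∑ c, g c :=
      Finset.sum_lt_sum (fun i _ => hg1 i) ⟨c, Finset.mem_univ c, hlt⟩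
    rw [hgeq] at this
    simp at this
  refine ⟨fun s => ⟨hrowsum s, hf3 s⟩, fun c => ⟨hcolsum c, ?_⟩⟩
  obtain ⟨s, hs⟩ := Finset.card_eq_one.mp (hg1' c)
  refine ⟨s, ?_, fun t ht => ?_⟩
  · have : s ∈ Finset.univ.filter fun s => 0 < Z s c := hs ▸ Finset.mem_singleton_self s
    exact (Finset.mem_filter.mp this).2
  · have : t ∈ Finset.univ.filter fun s => 0 < Z s c :=
      Finset.mem_filter.mpr ⟨Finset.mem_univ t, ht⟩
    rw [hs] at this
    exact Finset.mem_singleton.mp this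
end

section
/- The supremum defining the restricted joint allocation-matching problem is attained: for any U, Λ, d, Γ as in the context, the set of Γ-feasible matrices is nonempty and compact, and there exists a Γ-feasible Z with ∑_{s,c} Z s c = JAM*(U,Λ,d,Γ). -/
open scoped Classical

/-- `Z` is a feasible matrix for the restricted joint allocation-matching problem, where
only pairs in `Γ` may carry positive flow. -/
def JAMFeasibleRestr {n m : ℕ} (U : Fin n → ℝ) (Λ : Fin m → ℝ) (d : Fin n → ℕ)
    (Γ : Set (Fin n × Fin m)) (Z : Fin n → Fin m → ℝ) : Prop :=
  (∀ s c, 0 ≤ Z s c) ∧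
  (∀ s, ∑ c, Z s c ≤ U s) ∧
  (∀ c, ∑ s, Z s c ≤ Λ c) ∧
  (∀ s, (Finset.univ.filter fun c => 0 < Z s c).card ≤ d s) ∧
  (∀ s c, (s, c) ∉ Γ → Z s c = 0)

/-- Optimal value `JAM*(U,Λ,d,Γ)` of the restricted problem. -/
noncomputable def JAMstarRestr {n m : ℕ} (U : Fin n → ℝ) (Λ : Fin m → ℝ) (d : Fin n → ℕ)
    (Γ : Set (Fin n × Fin m)) : ℝ :=
  sSup {v : ℝ | ∃ Z, JAMFeasibleRestr U Λ d Γ Z ∧ v = ∑ s, ∑ c, Z s c}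

lemma jam_eval_continuous {n m : ℕ} (s : Fin n) (c : Fin m) :
    Continuous fun Z : Fin n → Fin m → ℝ => Z s c :=
  (continuous_apply c).comp (continuous_apply s)

lemma jam_compact_aux {n m : ℕ} (U : Fin n → ℝ) (Λ : Fin m → ℝ)
    (Γ : Set (Fin n × Fin m)) (S : Fin n → Finset (Fin m)) :
    IsCompact {Z : Fin n → Fin m → ℝ | (∀ s c, 0 ≤ Z s c) ∧ (∀ s, ∑ c, Z s c ≤ U s) ∧
      (∀ c, ∑ s, Z s c ≤ Λ c) ∧ (∀ s c, c ∉ S s → Z s c = 0) ∧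
      (∀ s c, (s, c) ∉ Γ → Z s c = 0)} := by
  have h1 : IsClosed {Z : Fin n → Fin m → ℝ | ∀ s c, 0 ≤ Z s c} := by
    simp only [Set.setOf_forall]
    exact isClosed_iInter fun s => isClosed_iInter fun c =>
      isClosed_le continuous_const (jam_eval_continuous s c)
  have h2 : IsClosed {Z : Fin n → Fin m → ℝ | ∀ s, ∑ c, Z s c ≤ U s} := by
    simp only [Set.setOf_forall]
    exact isClosed_iInter fun s =>
      isClosed_le (continuous_finset_sum _ fun c _ => jam_eval_continuous s c) continuous_const
  have h3 : IsClosed {Z : Fin n → Fin m → ℝ | ∀ c, ∑ s, Z s c ≤ Λ c} := by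
    simp only [Set.setOf_forall]
    exact isClosed_iInter fun c =>
      isClosed_le (continuous_finset_sum _ fun s _ => jam_eval_continuous s c) continuous_const
  have h4 : IsClosed {Z : Fin n → Fin m → ℝ | ∀ s c, c ∉ S s → Z s c = 0} := by
    simp only [Set.setOf_forall]
    refine isClosed_iInter fun s => isClosed_iInter fun c => ?_
    by_cases h : c ∈ S s
    · simp [h]
    · simpa [h] using isClosed_eq (jam_eval_continuous s c) continuous_const
  have h5 : IsClosed {Z : Fin n → Fin m → ℝ | ∀ s c, (s, c) ∉ Γ → Z s c = 0} := by
    simp only [Set.setOf_forall]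
    refine isClosed_iInter fun s => isClosed_iInter fun c => ?_
    by_cases h : (s, c) ∈ Γ
    · simp [h]
    · simpa [h] using isClosed_eq (jam_eval_continuous s c) continuous_const
  have hclosed : IsClosed {Z : Fin n → Fin m → ℝ | (∀ s c, 0 ≤ Z s c) ∧
      (∀ s, ∑ c, Z s c ≤ U s) ∧ (∀ c, ∑ s, Z s c ≤ Λ c) ∧
      (∀ s c, c ∉ S s → Z s c = 0) ∧ (∀ s c, (s, c) ∉ Γ → Z s c = 0)} := by
    simp only [Set.setOf_and]
    exact h1.inter (h2.inter (h3.inter (h4.inter h5)))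
  have hsub : {Z : Fin n → Fin m → ℝ | (∀ s c, 0 ≤ Z s c) ∧ (∀ s, ∑ c, Z s c ≤ U s) ∧
      (∀ c, ∑ s, Z s c ≤ Λ c) ∧ (∀ s c, c ∉ S s → Z s c = 0) ∧
      (∀ s c, (s, c) ∉ Γ → Z s c = 0)} ⊆
      Set.Icc (0 : Fin n → Fin m → ℝ) (fun s _ => U s) := by
    rintro Z ⟨hpos, hrow, -, -, -⟩
    constructor
    · intro s; intro c; exact hpos s c
    · intro s; intro c
      calc Z s c ≤ ∑ c', Z s c' :=
            Finset.single_le_sum (fun c' _ => hpos s c') (Finset.mem_univ c)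
        _ ≤ U s := hrow s
  exact IsCompact.of_isClosed_subset isCompact_Icc hclosed hsub

/-- the set of `Γ`-feasible matrices is nonempty and compact, and the
supremum `JAM*(U,Λ,d,Γ)` is attained by some `Γ`-feasible matrix. -/
theorem jam_restricted_attained {n m : ℕ} (hn : 0 < n) (hm : 0 < m)
    (U : Fin n → ℝ) (hU : ∀ s, 0 ≤ U s)
    (Λ : Fin m → ℝ) (hΛ : ∀ c, 0 ≤ Λ c)
    (d : Fin n → ℕ) (Γ : Set (Fin n × Fin m)) :
    {Z : Fin n → Fin m → ℝ | JAMFeasibleRestr U Λ d Γ Z}.Nonempty ∧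
    IsCompact {Z : Fin n → Fin m → ℝ | JAMFeasibleRestr U Λ d Γ Z} ∧
    ∃ Z : Fin n → Fin m → ℝ, JAMFeasibleRestr U Λ d Γ Z ∧
      ∑ s, ∑ c, Z s c = JAMstarRestr U Λ d Γ := by
  set K := {Z : Fin n → Fin m → ℝ | JAMFeasibleRestr U Λ d Γ Z} with hKdef
  have hfeas0 : JAMFeasibleRestr U Λ d Γ (fun _ _ => 0) := by
    refine ⟨fun s c => le_refl 0, ?_, ?_, ?_, fun s c _ => rfl⟩
    · intro s; simpa using hU s
    · intro c; simpa using hΛ c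
    · intro s; simp
  have hne : K.Nonempty := ⟨_, hfeas0⟩
  have hcomp : IsCompact K := by
    have hK : K = ⋃ S ∈ {S : Fin n → Finset (Fin m) | ∀ s, (S s).card ≤ d s},
        {Z : Fin n → Fin m → ℝ | (∀ s c, 0 ≤ Z s c) ∧ (∀ s, ∑ c, Z s c ≤ U s) ∧
          (∀ c, ∑ s, Z s c ≤ Λ c) ∧ (∀ s c, c ∉ S s → Z s c = 0) ∧
          (∀ s c, (s, c) ∉ Γ → Z s c = 0)} := by
      ext Z
      constructor
      · rintro ⟨hpos, hrow, hcol, hcard, hΓz⟩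
        refine Set.mem_biUnion (x := fun s => Finset.univ.filter fun c => 0 < Z s c)
          hcard ⟨hpos, hrow, hcol, ?_, hΓz⟩
        intro s c hc
        simp only [Finset.mem_filter, Finset.mem_univ, true_and] at hc
        exact le_antisymm (not_lt.mp hc) (hpos s c)
      · intro h
        obtain ⟨T, hTcard, hpos, hrow, hcol, hsupp, hΓz⟩ := Set.mem_iUnion₂.mp h
        refine ⟨hpos, hrow, hcol, fun s => le_trans ?_ (hTcard s), hΓz⟩
        refine Finset.card_le_card fun c hc => ?_
        simp only [Finset.mem_filter, Finset.mem_univ, true_and] at hc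
        by_contra hcT
        exact absurd (hsupp s c hcT) (ne_of_gt hc)
    rw [hK]
    exact (Set.finite_univ.subset (Set.subset_univ _)).isCompact_biUnion
      fun S _ => jam_compact_aux U Λ Γ S
  have hcont : Continuous fun Z : Fin n → Fin m → ℝ => ∑ s, ∑ c, Z s c :=
    continuous_finset_sum _ fun s _ => continuous_finset_sum _ fun c _ =>
      jam_eval_continuous s c
  obtain ⟨Z, hZK, hmax⟩ := hcomp.exists_isMaxOn hne hcont.continuousOn
  refine ⟨hne, hcomp, Z, hZK, ?_⟩
  have hub : ∀ v ∈ {v : ℝ | ∃ W, JAMFeasibleRestr U Λ d Γ W ∧ v = ∑ s, ∑ c, W s c},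
      v ≤ ∑ s, ∑ c, Z s c := by
    rintro v ⟨W, hW, rfl⟩
    exact hmax hW
  refine le_antisymm (le_csSup ⟨_, hub⟩ ⟨Z, hZK, rfl⟩) (csSup_le ⟨_, ⟨Z, hZK, rfl⟩⟩ hub)
end

section
/- Every greedy execution terminates in at most m + n iterations: if ((s_0,c_0),…,(s_{q−1},c_{q−1})) is a greedy execution for the instance (U,Λ,d), then q ≤ m + n. -/
open scoped Classical

/-- Residual state `(fU_k, fC_k, deg_k)` of the greedy algorithm after `k` iterations,
when the pair chosen at iteration `k` is `p k`. -/
noncomputable def greedyState {n m : ℕ} (U : Fin n → ℝ) (Λ : Fin m → ℝ) (d : Fin n → ℕ)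
    (p : ℕ → Fin n × Fin m) : ℕ → (Fin n → ℝ) × (Fin m → ℝ) × (Fin n → ℕ)
  | 0 => (U, Λ, d)
  | k + 1 =>
      let st := greedyState U Λ d p k
      let f := min (st.1 (p k).1) (st.2.1 (p k).2)
      (Function.update st.1 (p k).1 (st.1 (p k).1 - f),
       Function.update st.2.1 (p k).2 (st.2.1 (p k).2 - f),
       Function.update st.2.2 (p k).1 (st.2.2 (p k).1 - 1))

/-- Flow `f_k = min(fU_k(s_k), fC_k(c_k))` matched by the greedy algorithm at iteration `k`. -/
noncomputable def greedyFlow {n m : ℕ} (U : Fin n → ℝ) (Λ : Fin m → ℝ) (d : Fin n → ℕ)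
    (p : ℕ → Fin n × Fin m) (k : ℕ) : ℝ :=
  min ((greedyState U Λ d p k).1 (p k).1) ((greedyState U Λ d p k).2.1 (p k).2)

/-- The sequence of pairs `p 0, …, p (q-1)` is a valid execution of the greedy algorithm on
the instance `(U, Λ, d)`: at each step the chosen pair has positive residual server flow,
positive residual content flow and positive residual degree, it maximizes
`min(fU_k(s), fC_k(c))` among all such pairs, and at step `q` no valid pair remains. -/
def IsGreedyExec {n m : ℕ} (U : Fin n → ℝ) (Λ : Fin m → ℝ) (d : Fin n → ℕ)
    (p : ℕ → Fin n × Fin m) (q : ℕ) : Prop :=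
  (∀ k < q,
    0 < (greedyState U Λ d p k).1 (p k).1 ∧
    0 < (greedyState U Λ d p k).2.1 (p k).2 ∧
    0 < (greedyState U Λ d p k).2.2 (p k).1 ∧
    ∀ s c, 0 < (greedyState U Λ d p k).1 s → 0 < (greedyState U Λ d p k).2.1 c →
      0 < (greedyState U Λ d p k).2.2 s →
      min ((greedyState U Λ d p k).1 s) ((greedyState U Λ d p k).2.1 c) ≤
        greedyFlow U Λ d p k) ∧
  (∀ s c, ¬(0 < (greedyState U Λ d p q).1 s ∧ 0 < (greedyState U Λ d p q).2.1 c ∧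
      0 < (greedyState U Λ d p q).2.2 s))

section Aux
variable {n m : ℕ} (U : Fin n → ℝ) (Λ : Fin m → ℝ) (d : Fin n → ℕ) (p : ℕ → Fin n × Fin m)

lemma greedy_nonneg (hU : ∀ s, 0 ≤ U s) (hΛ : ∀ c, 0 ≤ Λ c) (k : ℕ) :
    (∀ s, 0 ≤ (greedyState U Λ d p k).1 s) ∧
    (∀ c, 0 ≤ (greedyState U Λ d p k).2.1 c) := by
  induction k with
  | zero => exact ⟨hU, hΛ⟩
  | succ k ih =>
    refine ⟨fun s => ?_, fun c => ?_⟩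
    · simp only [greedyState, Function.update_apply]
      split
      · have := min_le_left ((greedyState U Λ d p k).1 (p k).1)
          ((greedyState U Λ d p k).2.1 (p k).2)
        linarith
      · exact ih.1 s
    · simp only [greedyState, Function.update_apply]
      split
      · have := min_le_right ((greedyState U Λ d p k).1 (p k).1)
          ((greedyState U Λ d p k).2.1 (p k).2)
        linarith
      · exact ih.2 c

lemma greedy_antitone (hU : ∀ s, 0 ≤ U s) (hΛ : ∀ c, 0 ≤ Λ c) (k : ℕ) :
    (∀ s, (greedyState U Λ d p (k+1)).1 s ≤ (greedyState U Λ d p k).1 s) ∧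
    (∀ c, (greedyState U Λ d p (k+1)).2.1 c ≤ (greedyState U Λ d p k).2.1 c) := by
  have hf : 0 ≤ min ((greedyState U Λ d p k).1 (p k).1)
      ((greedyState U Λ d p k).2.1 (p k).2) :=
    le_min ((greedy_nonneg U Λ d p hU hΛ k).1 _) ((greedy_nonneg U Λ d p hU hΛ k).2 _)
  refine ⟨fun s => ?_, fun c => ?_⟩
  · simp only [greedyState, Function.update_apply]
    split
    · next h => subst h; linarith
    · exact le_rfl
  · simp only [greedyState, Function.update_apply]
    split
    · next h => subst h; linarith
    · exact le_rfl

lemma greedy_zero_persist (hU : ∀ s, 0 ≤ U s) (hΛ : ∀ c, 0 ≤ Λ c) (k : ℕ) :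
    (∀ s, (greedyState U Λ d p k).1 s = 0 → (greedyState U Λ d p (k+1)).1 s = 0) ∧
    (∀ c, (greedyState U Λ d p k).2.1 c = 0 → (greedyState U Λ d p (k+1)).2.1 c = 0) := by
  refine ⟨fun s hs => le_antisymm ?_ ((greedy_nonneg U Λ d p hU hΛ (k+1)).1 s),
    fun c hc => le_antisymm ?_ ((greedy_nonneg U Λ d p hU hΛ (k+1)).2 c)⟩
  · calc (greedyState U Λ d p (k+1)).1 s ≤ (greedyState U Λ d p k).1 s :=
        (greedy_antitone U Λ d p hU hΛ k).1 s
      _ = 0 := hs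
  · calc (greedyState U Λ d p (k+1)).2.1 c ≤ (greedyState U Λ d p k).2.1 c :=
        (greedy_antitone U Λ d p hU hΛ k).2 c
      _ = 0 := hc

end Aux

/-- every greedy execution terminates in at most `m + n` iterations. -/
theorem greedy_terminates {n m : ℕ} (hn : 0 < n) (hm : 0 < m)
    (U : Fin n → ℝ) (hU : ∀ s, 0 ≤ U s)
    (Λ : Fin m → ℝ) (hΛ : ∀ c, 0 ≤ Λ c)
    (d : Fin n → ℕ)
    (p : ℕ → Fin n × Fin m) (q : ℕ) (h : IsGreedyExec U Λ d p q) :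
    q ≤ m + n := by
  classical
  -- zero-set of residuals at time k
  set Z : ℕ → Finset (Fin n ⊕ Fin m) := fun k =>
    Finset.univ.filter (fun x => Sum.elim
      (fun s => (greedyState U Λ d p k).1 s = 0)
      (fun c => (greedyState U Λ d p k).2.1 c = 0) x) with hZ
  have hsub : ∀ k, Z k ⊆ Z (k+1) := by
    intro k x hx
    simp only [hZ, Finset.mem_filter, Finset.mem_univ, true_and] at hx ⊢
    cases x with
    | inl s => exact (greedy_zero_persist U Λ d p hU hΛ k).1 s hx
    | inr c => exact (greedy_zero_persist U Λ d p hU hΛ k).2 c hx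
  have hstrict : ∀ k < q, Z k ⊂ Z (k+1) := by
    intro k hk
    obtain ⟨hs, hc, -, -⟩ := h.1 k hk
    refine Finset.ssubset_iff_of_subset (hsub k) |>.2 ?_
    rcases le_total ((greedyState U Λ d p k).1 (p k).1)
        ((greedyState U Λ d p k).2.1 (p k).2) with hle | hle
    · refine ⟨Sum.inl (p k).1, ?_, ?_⟩ <;>
        simp only [hZ, Finset.mem_filter, Finset.mem_univ, true_and, Sum.elim_inl]
      · simp only [greedyState, Function.update_self]
        rw [min_eq_left hle]; ring
      · linarith
    · refine ⟨Sum.inr (p k).2, ?_, ?_⟩ <;>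
        simp only [hZ, Finset.mem_filter, Finset.mem_univ, true_and, Sum.elim_inr]
      · simp only [greedyState, Function.update_self]
        rw [min_eq_right hle]; ring
      · linarith
  have hcard : ∀ k ≤ q, k ≤ (Z k).card := by
    intro k hk
    induction k with
    | zero => exact Nat.zero_le _
    | succ k ih =>
      have h1 : (Z k).card < (Z (k+1)).card :=
        Finset.card_lt_card (hstrict k (Nat.lt_of_succ_le hk))
      have h2 := ih (Nat.le_of_succ_le hk)
      omega
  have hle : q ≤ (Z q).card := hcard q le_rfl
  have hb : (Z q).card ≤ n + m := by
    calc (Z q).card ≤ (Finset.univ : Finset (Fin n ⊕ Fin m)).card :=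
        Finset.card_le_card (Finset.filter_subset _ _)
      _ = n + m := by simp
  omega
end

section
/- Constant-factor approximation guarantee of the greedy algorithm (Theorem 2): the output ∑_{k<q} f_k of every greedy execution for the instance (U,Λ,d) is at least (1/2)·JAM*(U,Λ,d). -/
open scoped Classical

open Finset in
lemma jam_step_lemma {n m : ℕ} (fU : Fin n → ℝ) (fC : Fin m → ℝ) (deg : Fin n → ℕ)
    (s0 : Fin n) (c0 : Fin m)
    (hs : 0 < fU s0) (hc : 0 < fC c0) (hd : 0 < deg s0)
    (hmax : ∀ s c, 0 < fU s → 0 < fC c → 0 < deg s →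
      min (fU s) (fC c) ≤ min (fU s0) (fC c0))
    (Z : Fin n → Fin m → ℝ) (hZ : JAMFeasible fU fC deg Z) :
    ∃ Z', JAMFeasible (Function.update fU s0 (fU s0 - min (fU s0) (fC c0)))
        (Function.update fC c0 (fC c0 - min (fU s0) (fC c0)))
        (Function.update deg s0 (deg s0 - 1)) Z' ∧
      ∑ s, ∑ c, Z s c ≤ (∑ s, ∑ c, Z' s c) + 2 * min (fU s0) (fC c0) := by
  obtain ⟨hpos, hrow, hcol, hdeg⟩ := hZ
  set f := min (fU s0) (fC c0) with hfdef
  have hf : 0 < f := lt_min hs hc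
  have hentry_row : ∀ s c, Z s c ≤ fU s := fun s c =>
    le_trans (Finset.single_le_sum (fun c _ => hpos s c) (mem_univ c)) (hrow s)
  have hentry_col : ∀ s c, Z s c ≤ fC c := fun s c =>
    le_trans (Finset.single_le_sum (fun s _ => hpos s c) (mem_univ s)) (hcol c)
  have key : ∀ c, 0 < Z s0 c → Z s0 c ≤ f := by
    intro c hZc
    have hfCc : 0 < fC c := lt_of_lt_of_le hZc (hentry_col s0 c)
    calc Z s0 c ≤ min (fU s0) (fC c) := le_min (hentry_row s0 c) (hentry_col s0 c)
      _ ≤ f := hmax s0 c hs hfCc hd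
  set P := Finset.univ.filter (fun c => 0 < Z s0 c) with hPdef
  have hPcard : P.card ≤ deg s0 := hdeg s0
  obtain ⟨K, hc0K, hLK, hKdeg⟩ :
      ∃ K : Finset (Fin m), c0 ∈ K ∧ (∑ c ∈ K, Z s0 c) ≤ f ∧
        (P \ K).card ≤ deg s0 - 1 := by
    by_cases h1 : 0 < Z s0 c0
    · refine ⟨{c0}, mem_singleton_self c0, by simpa using key c0 h1, ?_⟩
      have he : P \ {c0} = P.erase c0 := by ext x; simp [Finset.mem_erase, and_comm]
      rw [he, Finset.card_erase_of_mem (by simp [hPdef, h1])]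
      exact Nat.sub_le_sub_right hPcard 1
    · have hz0 : Z s0 c0 = 0 := le_antisymm (not_lt.mp h1) (hpos s0 c0)
      by_cases h2 : deg s0 ≤ P.card
      · have hPne : P.Nonempty := Finset.card_pos.mp (lt_of_lt_of_le hd h2)
        obtain ⟨ck, hck⟩ := hPne
        have hckpos : 0 < Z s0 ck := (Finset.mem_filter.mp hck).2
        have hne : c0 ≠ ck := by rintro rfl; exact h1 hckpos
        refine ⟨{c0, ck}, by simp, ?_, ?_⟩
        · rw [Finset.sum_pair hne, hz0, zero_add]; exact key ck hckpos
        · have hsub : P \ {c0, ck} ⊆ P.erase ck := by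
            intro x hx
            simp only [Finset.mem_sdiff, Finset.mem_insert, Finset.mem_singleton] at hx
            exact Finset.mem_erase.mpr ⟨fun h => hx.2 (Or.inr h), hx.1⟩
          calc (P \ {c0, ck}).card ≤ (P.erase ck).card := Finset.card_le_card hsub
            _ = P.card - 1 := Finset.card_erase_of_mem hck
            _ ≤ deg s0 - 1 := Nat.sub_le_sub_right hPcard 1
      · exact ⟨{c0}, mem_singleton_self c0, by simp [hz0, hf.le],
          le_trans (Finset.card_le_card Finset.sdiff_subset)
            (Nat.le_sub_one_of_lt (not_le.mp h2))⟩
  set R1 := ∑ c ∈ Kᶜ, Z s0 c with hR1def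
  have hR1nonneg : 0 ≤ R1 := Finset.sum_nonneg fun c _ => hpos s0 c
  have hRsplit : ∑ c, Z s0 c = (∑ c ∈ K, Z s0 c) + R1 := (Finset.sum_add_sum_compl K _).symm
  set C1 := ∑ s ∈ Finset.univ.erase s0, Z s c0 with hC1def
  have hC1nonneg : 0 ≤ C1 := Finset.sum_nonneg fun s _ => hpos s c0
  have hC1split : ∑ s, Z s c0 = Z s0 c0 + C1 :=
    (Finset.add_sum_erase _ _ (mem_univ s0)).symm
  have hC1le : C1 ≤ fC c0 := by
    have h0 : C1 ≤ ∑ s, Z s c0 := by rw [hC1split]; linarith [hpos s0 c0]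
    exact h0.trans (hcol c0)
  set tR := fU s0 - f with htRdef
  set tC := fC c0 - f with htCdef
  have htR : 0 ≤ tR := sub_nonneg.mpr (min_le_left _ _)
  have htC : 0 ≤ tC := sub_nonneg.mpr (min_le_right _ _)
  set lam := if R1 ≤ tR then (1:ℝ) else tR / R1 with hlamdef
  set mu := if C1 ≤ tC then (1:ℝ) else tC / C1 with hmudef
  have hlam0 : 0 ≤ lam := by
    rw [hlamdef]; split
    · norm_num
    · exact div_nonneg htR hR1nonneg
  have hlam1 : lam ≤ 1 := by
    rw [hlamdef]; split
    · exact le_refl _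
    · next hh => exact (div_le_one (lt_of_le_of_lt htR (not_le.mp hh))).mpr (not_le.mp hh).le
  have hmu0 : 0 ≤ mu := by
    rw [hmudef]; split
    · norm_num
    · exact div_nonneg htC hC1nonneg
  have hmu1 : mu ≤ 1 := by
    rw [hmudef]; split
    · exact le_refl _
    · next hh => exact (div_le_one (lt_of_le_of_lt htC (not_le.mp hh))).mpr (not_le.mp hh).le
  have hlamR1 : lam * R1 ≤ tR := by
    rw [hlamdef]; split
    · next hh => simpa using hh
    · next hh =>
        have hR1pos : 0 < R1 := lt_of_le_of_lt htR (not_le.mp hh)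
        rw [div_mul_cancel₀ _ hR1pos.ne']
  have hmuC1 : mu * C1 ≤ tC := by
    rw [hmudef]; split
    · next hh => simpa using hh
    · next hh =>
        have hC1pos : 0 < C1 := lt_of_le_of_lt htC (not_le.mp hh)
        rw [div_mul_cancel₀ _ hC1pos.ne']
  have hRbound : ∑ c, Z s0 c ≤ lam * R1 + f := by
    rw [hlamdef]; split
    · next hh => rw [hRsplit]; linarith
    · next hh =>
        have hR1pos : 0 < R1 := lt_of_le_of_lt htR (not_le.mp hh)
        rw [div_mul_cancel₀ _ hR1pos.ne']
        have := hrow s0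
        rw [htRdef]; linarith
  have hmuC1' : (1 - mu) * C1 ≤ f := by
    rw [hmudef]; split
    · next hh => simpa using hf.le
    · next hh =>
        have hC1pos : 0 < C1 := lt_of_le_of_lt htC (not_le.mp hh)
        have : tC / C1 * C1 = tC := div_mul_cancel₀ _ hC1pos.ne'
        calc (1 - tC / C1) * C1 = C1 - tC / C1 * C1 := by ring
          _ = C1 - tC := by rw [this]
          _ ≤ f := by rw [htCdef]; linarith
  set Z' : Fin n → Fin m → ℝ := fun s c =>
    if s = s0 then lam * (if c ∈ K then 0 else Z s c)
    else if c = c0 then mu * Z s c else Z s c with hZ'def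
  have hZ'row0 : ∀ c, Z' s0 c = lam * (if c ∈ K then 0 else Z s0 c) := fun c => by
    rw [hZ'def]; simp
  have hZ'other : ∀ s, s ≠ s0 → ∀ c, Z' s c = if c = c0 then mu * Z s c else Z s c := by
    intro s hsne c; rw [hZ'def]; simp [hsne]
  have hZ'pos : ∀ s c, 0 ≤ Z' s c := by
    intro s c
    rw [hZ'def]
    dsimp only
    split
    · apply mul_nonneg hlam0; split
      · exact le_refl 0
      · exact hpos _ _
    · split
      · exact mul_nonneg hmu0 (hpos _ _)
      · exact hpos _ _
  have hZ'le : ∀ s c, Z' s c ≤ Z s c := by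
    intro s c
    rw [hZ'def]
    dsimp only
    split
    · next hh =>
        subst hh
        split
        · next => simpa using hpos s c
        · next => exact mul_le_of_le_one_left (hpos s c) hlam1
    · split
      · exact mul_le_of_le_one_left (hpos _ _) hmu1
      · exact le_refl _
  have hrow0sum : ∑ c, Z' s0 c = lam * R1 := by
    rw [Finset.sum_congr rfl (fun c _ => hZ'row0 c), ← Finset.mul_sum]
    congr 1
    rw [← Finset.sum_add_sum_compl K]
    rw [Finset.sum_congr rfl (fun c hcK => if_pos hcK), Finset.sum_const_zero, zero_add]
    exact Finset.sum_congr rfl (fun c hcK => if_neg (by simpa using hcK))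
  refine ⟨Z', ⟨hZ'pos, ?_, ?_, ?_⟩, ?_⟩
  · -- row sums
    intro s
    by_cases hss : s = s0
    · rw [hss, Function.update_self, hrow0sum]
      exact hlamR1
    · rw [Function.update_of_ne hss]
      calc ∑ c, Z' s c ≤ ∑ c, Z s c := Finset.sum_le_sum (fun c _ => hZ'le s c)
        _ ≤ fU s := hrow s
  · -- column sums
    intro c
    by_cases hcc : c = c0
    · rw [hcc, Function.update_self]
      have hcol0 : ∑ s, Z' s c0 = mu * C1 := by
        rw [← Finset.add_sum_erase _ _ (mem_univ s0)]
        rw [hZ'row0 c0, if_pos hc0K, mul_zero, zero_add]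
        rw [Finset.sum_congr rfl (fun s hsmem => by
          rw [hZ'other s (Finset.mem_erase.mp hsmem).1 c0, if_pos rfl]), ← Finset.mul_sum]
      rw [hcol0]
      exact hmuC1
    · rw [Function.update_of_ne hcc]
      calc ∑ s, Z' s c ≤ ∑ s, Z s c := Finset.sum_le_sum (fun s _ => hZ'le s c)
        _ ≤ fC c := hcol c
  · -- degrees
    intro s
    by_cases hss : s = s0
    · rw [hss, Function.update_self]
      refine le_trans (Finset.card_le_card ?_) hKdeg
      intro c hcmem
      rw [Finset.mem_filter] at hcmem
      have hcpos := hcmem.2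
      rw [hZ'row0 c] at hcpos
      by_cases hcK : c ∈ K
      · rw [if_pos hcK, mul_zero] at hcpos; exact absurd hcpos (lt_irrefl 0)
      · rw [if_neg hcK] at hcpos
        have hZpos : 0 < Z s0 c := by
          by_contra hle
          push_neg at hle
          nlinarith
        exact Finset.mem_sdiff.mpr ⟨by simp [hPdef, hZpos], hcK⟩
    · rw [Function.update_of_ne hss]
      refine le_trans (Finset.card_le_card ?_) (hdeg s)
      intro c hcmem
      rw [Finset.mem_filter] at hcmem
      have hcpos := hcmem.2
      rw [hZ'other s hss c] at hcpos
      have hZpos : 0 < Z s c := by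
        by_cases hcc : c = c0
        · rw [if_pos hcc] at hcpos
          by_contra hle
          push_neg at hle
          nlinarith
        · rwa [if_neg hcc] at hcpos
      simp [hZpos]
  · -- the sum bound
    have hrows : ∀ s ∈ Finset.univ.erase s0, ∑ c, Z s c = (∑ c, Z' s c) + (1 - mu) * Z s c0 := by
      intro s hsmem
      have hsne := (Finset.mem_erase.mp hsmem).1
      have : ∑ c, Z' s c = mu * Z s c0 + ∑ c ∈ Finset.univ.erase c0, Z s c := by
        rw [Finset.sum_congr rfl (fun c _ => hZ'other s hsne c)]
        rw [← Finset.add_sum_erase _ _ (mem_univ c0), if_pos rfl]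
        congr 1
        exact Finset.sum_congr rfl (fun c hcmem => if_neg (Finset.mem_erase.mp hcmem).1)
      rw [this, ← Finset.add_sum_erase _ (fun c => Z s c) (mem_univ c0)]
      ring
    have hsum1 : ∑ s, ∑ c, Z s c = (∑ c, Z s0 c) + ∑ s ∈ Finset.univ.erase s0, ∑ c, Z s c :=
      (Finset.add_sum_erase _ _ (mem_univ s0)).symm
    have hsum2 : ∑ s, ∑ c, Z' s c = (∑ c, Z' s0 c) + ∑ s ∈ Finset.univ.erase s0, ∑ c, Z' s c :=
      (Finset.add_sum_erase _ _ (mem_univ s0)).symm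
    have herase : ∑ s ∈ Finset.univ.erase s0, ∑ c, Z s c
        = (∑ s ∈ Finset.univ.erase s0, ∑ c, Z' s c) + (1 - mu) * C1 := by
      rw [Finset.sum_congr rfl hrows, Finset.sum_add_distrib, hC1def, Finset.mul_sum]
    rw [hsum1, hsum2, herase, hrow0sum]
    linarith [hRbound, hmuC1']

lemma greedyState_zero {n m : ℕ} (U : Fin n → ℝ) (Λ : Fin m → ℝ) (d : Fin n → ℕ)
    (p : ℕ → Fin n × Fin m) : greedyState U Λ d p 0 = (U, Λ, d) := rfl

lemma greedyState_succ {n m : ℕ} (U : Fin n → ℝ) (Λ : Fin m → ℝ) (d : Fin n → ℕ)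
    (p : ℕ → Fin n × Fin m) (k : ℕ) :
    greedyState U Λ d p (k + 1) =
      (Function.update (greedyState U Λ d p k).1 (p k).1
        ((greedyState U Λ d p k).1 (p k).1 -
          min ((greedyState U Λ d p k).1 (p k).1) ((greedyState U Λ d p k).2.1 (p k).2)),
       Function.update (greedyState U Λ d p k).2.1 (p k).2
        ((greedyState U Λ d p k).2.1 (p k).2 -
          min ((greedyState U Λ d p k).1 (p k).1) ((greedyState U Λ d p k).2.1 (p k).2)),
       Function.update (greedyState U Λ d p k).2.2 (p k).1
        ((greedyState U Λ d p k).2.2 (p k).1 - 1)) := rfl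

open Finset in
lemma jam_terminal_lemma {n m : ℕ} (fU : Fin n → ℝ) (fC : Fin m → ℝ) (deg : Fin n → ℕ)
    (hterm : ∀ s c, ¬(0 < fU s ∧ 0 < fC c ∧ 0 < deg s))
    (Z : Fin n → Fin m → ℝ) (hZ : JAMFeasible fU fC deg Z) :
    ∑ s, ∑ c, Z s c ≤ 0 := by
  obtain ⟨hpos, hrow, hcol, hdeg⟩ := hZ
  have hzero : ∀ s c, Z s c = 0 := by
    intro s c
    by_contra hne
    have hZpos : 0 < Z s c := lt_of_le_of_ne (hpos s c) (Ne.symm hne)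
    refine hterm s c ⟨?_, ?_, ?_⟩
    · exact lt_of_lt_of_le hZpos
        (le_trans (Finset.single_le_sum (fun c _ => hpos s c) (mem_univ c)) (hrow s))
    · exact lt_of_lt_of_le hZpos
        (le_trans (Finset.single_le_sum (fun s _ => hpos s c) (mem_univ s)) (hcol c))
    · refine lt_of_lt_of_le ?_ (hdeg s)
      rw [Finset.card_pos]
      exact ⟨c, by simp [hZpos]⟩
  simp [hzero]

lemma jam_main_ind {n m : ℕ} (U : Fin n → ℝ) (Λ : Fin m → ℝ) (d : Fin n → ℕ)
    (p : ℕ → Fin n × Fin m) (q : ℕ) (h : IsGreedyExec U Λ d p q) :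
    ∀ j k, k + j = q → ∀ Z,
      JAMFeasible (greedyState U Λ d p k).1 (greedyState U Λ d p k).2.1
        (greedyState U Λ d p k).2.2 Z →
      ∑ s, ∑ c, Z s c ≤ 2 * ∑ i ∈ Finset.Ico k q, greedyFlow U Λ d p i := by
  intro j
  induction j with
  | zero =>
    intro k hk Z hZ
    have hkq : k = q := by omega
    subst hkq
    rw [Finset.Ico_self, Finset.sum_empty, mul_zero]
    exact jam_terminal_lemma _ _ _ h.2 Z hZ
  | succ j ih =>
    intro k hk Z hZ
    have hkq : k < q := by omega
    obtain ⟨h1, h2, h3, h4⟩ := h.1 k hkq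
    have hmax : ∀ s c, 0 < (greedyState U Λ d p k).1 s → 0 < (greedyState U Λ d p k).2.1 c →
        0 < (greedyState U Λ d p k).2.2 s →
        min ((greedyState U Λ d p k).1 s) ((greedyState U Λ d p k).2.1 c) ≤
          min ((greedyState U Λ d p k).1 (p k).1) ((greedyState U Λ d p k).2.1 (p k).2) :=
      fun s c a b c' => h4 s c a b c'
    obtain ⟨Z', hZ', hsum⟩ := jam_step_lemma _ _ _ _ _ h1 h2 h3 hmax Z hZ
    have hZ'' : JAMFeasible (greedyState U Λ d p (k+1)).1 (greedyState U Λ d p (k+1)).2.1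
        (greedyState U Λ d p (k+1)).2.2 Z' := by
      rw [greedyState_succ]
      exact hZ'
    have hrec := ih (k+1) (by omega) Z' hZ''
    rw [Finset.sum_eq_sum_Ico_succ_bot hkq]
    have hflow : greedyFlow U Λ d p k
        = min ((greedyState U Λ d p k).1 (p k).1) ((greedyState U Λ d p k).2.1 (p k).2) := rfl
    rw [mul_add, hflow]
    linarith

/-- Theorem 2: the output `∑_{k<q} f_k` of every greedy execution is at
least half the optimal value `JAM*(U,Λ,d)`. -/
theorem greedy_half_approx {n m : ℕ} (hn : 0 < n) (hm : 0 < m)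
    (U : Fin n → ℝ) (hU : ∀ s, 0 ≤ U s)
    (Λ : Fin m → ℝ) (hΛ : ∀ c, 0 ≤ Λ c)
    (d : Fin n → ℕ)
    (p : ℕ → Fin n × Fin m) (q : ℕ) (h : IsGreedyExec U Λ d p q) :
    (1 / 2) * JAMstar U Λ d ≤ ∑ k ∈ Finset.range q, greedyFlow U Λ d p k := by
  have hbound : ∀ x ∈ {v : ℝ | ∃ Z, JAMFeasible U Λ d Z ∧ v = ∑ s, ∑ c, Z s c},
      x ≤ 2 * ∑ k ∈ Finset.range q, greedyFlow U Λ d p k := by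
    rintro x ⟨Z, hZ, rfl⟩
    have h0 : JAMFeasible (greedyState U Λ d p 0).1 (greedyState U Λ d p 0).2.1
        (greedyState U Λ d p 0).2.2 Z := by rw [greedyState_zero]; exact hZ
    have := jam_main_ind U Λ d p q h q 0 (by omega) Z h0
    rw [Finset.range_eq_Ico]
    exact this
  have hnn : 0 ≤ 2 * ∑ k ∈ Finset.range q, greedyFlow U Λ d p k := by
    apply mul_nonneg (by norm_num)
    apply Finset.sum_nonneg
    intro k hk
    obtain ⟨h1, h2, -, -⟩ := h.1 k (Finset.mem_range.mp hk)
    exact le_of_lt (lt_min h1 h2)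
  have hsup := Real.sSup_le hbound hnn
  rw [JAMstar] at *
  linarith
end

section
/- Lipschitz-type bound on the restricted optimal value: for any nonnegative increments δU : Fin n → ℝ (δU s ≥ 0) and δΛ : Fin m → ℝ (δΛ c ≥ 0), one has JAM*(U + δU, Λ + δΛ, d, Γ) ≤ JAM*(U,Λ,d,Γ) + ∑_s δU s + ∑_c δΛ c. -/
open scoped Classical

lemma scale_facts (S B D : ℝ) (hB : 0 ≤ B) (hD : 0 ≤ D) (hSB : S ≤ B + D) :
    0 ≤ (if S ≤ B then (1:ℝ) else B / S) ∧ (if S ≤ B then (1:ℝ) else B / S) ≤ 1 ∧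
    (if S ≤ B then (1:ℝ) else B / S) * S ≤ B ∧
    S - (if S ≤ B then (1:ℝ) else B / S) * S ≤ D := by
  by_cases h : S ≤ B
  · simp [h, hD]
  · push_neg at h
    have hS : 0 < S := lt_of_le_of_lt hB h
    have hne : S ≠ 0 := ne_of_gt hS
    simp only [if_neg (not_le.mpr h)]
    refine ⟨div_nonneg hB hS.le, ?_, ?_, ?_⟩
    · exact div_le_one_of_le₀ h.le hS.le
    · rw [div_mul_cancel₀ _ hne]
    · rw [div_mul_cancel₀ _ hne]; linarith

lemma JAM_bdd {n m : ℕ} (U : Fin n → ℝ) (Λ : Fin m → ℝ) (d : Fin n → ℕ)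
    (Γ : Set (Fin n × Fin m)) :
    BddAbove {v : ℝ | ∃ Z, JAMFeasibleRestr U Λ d Γ Z ∧ v = ∑ s, ∑ c, Z s c} := by
  refine ⟨∑ s, U s, ?_⟩
  rintro v ⟨Z, hZ, rfl⟩
  exact Finset.sum_le_sum fun s _ => hZ.2.1 s

/-- Lipschitz-type bound on the restricted optimal value: increasing the
bandwidths by `δU` and the rates by `δΛ` increases the optimal value by at most
`∑_s δU s + ∑_c δΛ c`. -/
theorem jam_restricted_lipschitz {n m : ℕ} (hn : 0 < n) (hm : 0 < m)
    (U : Fin n → ℝ) (hU : ∀ s, 0 ≤ U s)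
    (Λ : Fin m → ℝ) (hΛ : ∀ c, 0 ≤ Λ c)
    (d : Fin n → ℕ) (Γ : Set (Fin n × Fin m))
    (δU : Fin n → ℝ) (hδU : ∀ s, 0 ≤ δU s)
    (δΛ : Fin m → ℝ) (hδΛ : ∀ c, 0 ≤ δΛ c) :
    JAMstarRestr (fun s => U s + δU s) (fun c => Λ c + δΛ c) d Γ ≤
      JAMstarRestr U Λ d Γ + ∑ s, δU s + ∑ c, δΛ c := by
  have hzero : (0:ℝ) ∈ {v : ℝ | ∃ Z, JAMFeasibleRestr U Λ d Γ Z ∧ v = ∑ s, ∑ c, Z s c} := by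
    refine ⟨fun _ _ => 0, ⟨fun _ _ => le_refl 0, ?_, ?_, ?_, fun _ _ _ => rfl⟩, by simp⟩
    · intro s; simpa using hU s
    · intro c; simpa using hΛ c
    · intro s; simp
  have hJAM0 : 0 ≤ JAMstarRestr U Λ d Γ := le_csSup (JAM_bdd U Λ d Γ) hzero
  have hsumU : 0 ≤ ∑ s, δU s := Finset.sum_nonneg fun s _ => hδU s
  have hsumΛ : 0 ≤ ∑ c, δΛ c := Finset.sum_nonneg fun c _ => hδΛ c
  apply Real.sSup_le _ (by linarith)
  rintro v ⟨Z, ⟨h0, hUb, hΛb, hd, hΓ⟩, rfl⟩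
  -- row scaling factors
  set a : Fin n → ℝ := fun s => if (∑ c, Z s c) ≤ U s then 1 else U s / (∑ c, Z s c) with ha
  have haF : ∀ s, 0 ≤ a s ∧ a s ≤ 1 ∧ a s * (∑ c, Z s c) ≤ U s ∧
      (∑ c, Z s c) - a s * (∑ c, Z s c) ≤ δU s := fun s =>
    scale_facts _ _ _ (hU s) (hδU s) (hUb s)
  set Z1 : Fin n → Fin m → ℝ := fun s c => a s * Z s c with hZ1
  have hZ1nn : ∀ s c, 0 ≤ Z1 s c := fun s c => mul_nonneg (haF s).1 (h0 s c)
  have hZ1le : ∀ s c, Z1 s c ≤ Z s c := fun s c => by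
    simpa using mul_le_of_le_one_left (h0 s c) (haF s).2.1
  have hZ1row : ∀ s, ∑ c, Z1 s c ≤ U s := fun s => by
    simpa [hZ1, ← Finset.mul_sum] using (haF s).2.2.1
  have hZ1loss : ∀ s, (∑ c, Z s c) - ∑ c, Z1 s c ≤ δU s := fun s => by
    simpa [hZ1, ← Finset.mul_sum] using (haF s).2.2.2
  -- column scaling factors
  set b : Fin m → ℝ := fun c => if (∑ s, Z1 s c) ≤ Λ c then 1 else Λ c / (∑ s, Z1 s c) with hb
  have hcol : ∀ c, (∑ s, Z1 s c) ≤ Λ c + δΛ c := fun c =>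
    le_trans (Finset.sum_le_sum fun s _ => hZ1le s c) (hΛb c)
  have hbF : ∀ c, 0 ≤ b c ∧ b c ≤ 1 ∧ b c * (∑ s, Z1 s c) ≤ Λ c ∧
      (∑ s, Z1 s c) - b c * (∑ s, Z1 s c) ≤ δΛ c := fun c =>
    scale_facts _ _ _ (hΛ c) (hδΛ c) (hcol c)
  set Z2 : Fin n → Fin m → ℝ := fun s c => b c * Z1 s c with hZ2
  have hZ2nn : ∀ s c, 0 ≤ Z2 s c := fun s c => mul_nonneg (hbF c).1 (hZ1nn s c)
  have hZ2le : ∀ s c, Z2 s c ≤ Z1 s c := fun s c => by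
    simpa using mul_le_of_le_one_left (hZ1nn s c) (hbF c).2.1
  have hZ2feas : JAMFeasibleRestr U Λ d Γ Z2 := by
    refine ⟨hZ2nn, ?_, ?_, ?_, ?_⟩
    · intro s
      exact le_trans (Finset.sum_le_sum fun c _ => hZ2le s c) (hZ1row s)
    · intro c
      simpa [hZ2, ← Finset.mul_sum] using (hbF c).2.2.1
    · intro s
      refine le_trans (Finset.card_le_card ?_) (hd s)
      intro c hc
      simp only [Finset.mem_filter, Finset.mem_univ, true_and] at hc ⊢
      exact lt_of_lt_of_le hc (le_trans (hZ2le s c) (hZ1le s c))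
    · intro s c hsc
      simp [hZ2, hZ1, hΓ s c hsc]
  have hmem : (∑ s, ∑ c, Z2 s c) ∈
      {v : ℝ | ∃ Z, JAMFeasibleRestr U Λ d Γ Z ∧ v = ∑ s, ∑ c, Z s c} := ⟨Z2, hZ2feas, rfl⟩
  have h1 : (∑ s, ∑ c, Z2 s c) ≤ JAMstarRestr U Λ d Γ := le_csSup (JAM_bdd U Λ d Γ) hmem
  have h2 : (∑ s, ∑ c, Z s c) - (∑ s, ∑ c, Z1 s c) ≤ ∑ s, δU s := by
    rw [← Finset.sum_sub_distrib]
    exact Finset.sum_le_sum fun s _ => hZ1loss s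
  have h3 : (∑ s, ∑ c, Z1 s c) - (∑ s, ∑ c, Z2 s c) ≤ ∑ c, δΛ c := by
    rw [Finset.sum_comm (f := fun s c => Z1 s c), Finset.sum_comm (f := fun s c => Z2 s c), ← Finset.sum_sub_distrib]
    refine Finset.sum_le_sum fun c _ => ?_
    have := (hbF c).2.2.2
    simpa [hZ2, ← Finset.mul_sum] using this
  linarith
end

section
/- Existence and uniqueness of the water-filling index: let m ≥ 1 and let λ_1 > λ_2 > … > λ_m > 0 be reals, with the convention λ_{m+1} = 0, and let T be a real with 0 < T ≤ ∑_{c=1}^m λ_c. Then there exists a unique k ∈ {1,…,m} such that ∑_{c=1}^{k−1} λ_c − (k−1)·λ_k < T ≤ ∑_{c=1}^{k} λ_c − k·λ_{k+1}. -/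
/-- existence and uniqueness of the water-filling index.  Here
`lam 1 > lam 2 > … > lam m > 0` with the convention `lam (m+1) = 0`, and
`0 < T ≤ ∑_{c=1}^m lam c`.  Then there is a unique `k ∈ {1,…,m}` with
`∑_{c=1}^{k-1} lam c − (k−1)·lam k < T ≤ ∑_{c=1}^{k} lam c − k·lam (k+1)`. -/
theorem waterfilling_index_exists_unique (m : ℕ) (hm : 1 ≤ m) (lam : ℕ → ℝ)
    (hdec : ∀ c, 1 ≤ c → c < m → lam (c + 1) < lam c)
    (hpos : 0 < lam m) (hconv : lam (m + 1) = 0)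
    (T : ℝ) (hT0 : 0 < T) (hTm : T ≤ ∑ c ∈ Finset.Icc 1 m, lam c) :
    ∃! k : ℕ, k ∈ Finset.Icc 1 m ∧
      (∑ c ∈ Finset.Icc 1 (k - 1), lam c) - ((k : ℝ) - 1) * lam k < T ∧
      T ≤ (∑ c ∈ Finset.Icc 1 k, lam c) - (k : ℝ) * lam (k + 1) := by
  classical
  set f : ℕ → ℝ := fun k => (∑ c ∈ Finset.Icc 1 k, lam c) - (k : ℝ) * lam (k + 1) with hfdef
  have hf0 : f 0 = 0 := by simp [hfdef]
  have hlam : ∀ k, 1 ≤ k → k ≤ m → lam (k + 1) < lam k := by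
    intro k hk1 hkm
    rcases lt_or_eq_of_le hkm with h | h
    · exact hdec k hk1 h
    · subst h; rw [hconv]; exact hpos
  have hstep : ∀ j, j + 1 ≤ m → f j < f (j + 1) := by
    intro j hj
    have hsum : (∑ c ∈ Finset.Icc 1 (j + 1), lam c)
        = (∑ c ∈ Finset.Icc 1 j, lam c) + lam (j + 1) :=
      Finset.sum_Icc_succ_top (by omega) lam
    have hl : lam (j + 1 + 1) < lam (j + 1) := hlam (j + 1) (by omega) hj
    have : ((j : ℝ) + 1) * lam (j + 1 + 1) < ((j : ℝ) + 1) * lam (j + 1) := by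
      apply mul_lt_mul_of_pos_left hl
      positivity
    simp only [hfdef, hsum]
    push_cast
    nlinarith
  have hmono : ∀ i j, i ≤ j → j ≤ m → f i ≤ f j := by
    intro i j hij hjm
    induction j with
    | zero => simp_all
    | succ n ih =>
      rcases Nat.lt_or_ge i (n + 1) with h | h
      · exact le_trans (ih (by omega) (by omega)) (le_of_lt (hstep n hjm))
      · have : i = n + 1 := by omega
        subst this; rfl
  have hfm : T ≤ f m := by
    simp only [hfdef, hconv, mul_zero, sub_zero]; exact hTm
  have hex : ∃ k, T ≤ f k := ⟨m, hfm⟩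
  set k := Nat.find hex with hk
  have hspec : T ≤ f k := Nat.find_spec hex
  have hkm : k ≤ m := Nat.find_min' hex hfm
  have hk1 : 1 ≤ k := by
    by_contra h
    have : k = 0 := by omega
    rw [this, hf0] at hspec
    linarith
  have hmin : f (k - 1) < T := by
    have := Nat.find_min hex (m := k - 1) (by omega)
    push_neg at this
    exact this
  -- rewrite f (k-1) into the goal shape
  have hcast : ∀ n, 1 ≤ n → f (n - 1) =
      (∑ c ∈ Finset.Icc 1 (n - 1), lam c) - ((n : ℝ) - 1) * lam n := by
    intro n hn
    simp only [hfdef]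
    have h1 : n - 1 + 1 = n := by omega
    rw [h1]
    have : ((n - 1 : ℕ) : ℝ) = (n : ℝ) - 1 := by
      push_cast [Nat.cast_sub hn]; ring
    rw [this]
  refine ⟨k, ⟨Finset.mem_Icc.mpr ⟨hk1, hkm⟩, ?_, hspec⟩, ?_⟩
  · rw [← hcast k hk1]; exact hmin
  · rintro k' ⟨hmem, h1, h2⟩
    obtain ⟨hk'1, hk'm⟩ := Finset.mem_Icc.mp hmem
    have h2' : T ≤ f k' := h2
    have h1' : f (k' - 1) < T := by rw [hcast k' hk'1]; exact h1
    by_contra hne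
    rcases Nat.lt_or_ge k' k with h | h
    · exact Nat.find_min hex h h2'
    · have hlt : k < k' := by omega
      have : f k ≤ f (k' - 1) := hmono k (k' - 1) (by omega) (by omega)
      linarith
end

section
/- The fluid-limit drift map is one-sided Lipschitz with constant 0: for all reals w₁, w₂ and all z₁ ∈ H(w₁), z₂ ∈ H(w₂), one has (z₁ − z₂)·(w₁ − w₂) ≤ 0. -/
open scoped Classical

/-- The set-valued fluid-limit drift map: `H(y) = {λ − y}` for `y < θ`,
`H(θ) = [−θ, λ − θ]`, and `H(y) = {−y}` for `y > θ`. -/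
noncomputable def Hmap (lam θ : ℝ) : ℝ → Set ℝ := fun y =>
  if y < θ then {lam - y} else if y = θ then Set.Icc (-θ) (lam - θ) else {-y}

/-- the fluid-limit drift map is one-sided Lipschitz with constant 0. -/
theorem Hmap_one_sided_lipschitz (lam θ : ℝ) (hlam : 0 ≤ lam) (hθ : 0 ≤ θ) :
    ∀ w₁ w₂ z₁ z₂ : ℝ, z₁ ∈ Hmap lam θ w₁ → z₂ ∈ Hmap lam θ w₂ →
      (z₁ - z₂) * (w₁ - w₂) ≤ 0 := by
  have key : ∀ w₁ w₂ z₁ z₂ : ℝ, z₁ ∈ Hmap lam θ w₁ → z₂ ∈ Hmap lam θ w₂ →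
      w₁ < w₂ → z₂ ≤ z₁ := by
    intro w₁ w₂ z₁ z₂ h1 h2 hlt
    simp only [Hmap] at h1 h2
    split_ifs at h1 h2 <;>
      simp only [Set.mem_Icc, Set.mem_singleton_iff] at h1 h2 <;>
      first
        | linarith [h1.1, h1.2, h2.1, h2.2]
        | linarith [h1.1, h1.2]
        | linarith [h2.1, h2.2]
        | linarith
  intro w₁ w₂ z₁ z₂ h1 h2
  rcases lt_trichotomy w₁ w₂ with h | h | h
  · have := key w₁ w₂ z₁ z₂ h1 h2 h
    nlinarith
  · simp [h]
  · have := key w₂ w₁ z₂ z₁ h2 h1 h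
    nlinarith
end

section
/- Uniqueness of solutions of a one-sided Lipschitz differential inclusion: let F : ℝ → Set ℝ satisfy (z₁ − z₂)·(w₁ − w₂) ≤ 0 for all reals w₁, w₂ and all z₁ ∈ F(w₁), z₂ ∈ F(w₂). Suppose y₁, y₂ : ℝ → ℝ are locally Lipschitz on [0,∞), y₁(0) = y₂(0), and for almost every t ≥ 0 (with respect to Lebesgue measure) each yᵢ is differentiable at t with derivative lying in F(yᵢ(t)). Then y₁(t) = y₂(t) for all t ≥ 0. -/
open MeasureTheory Set

/-
The squared distance `(y₁ - y₂)²` of two solutions is absolutely continuous on every `[0, t]`,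
and at almost every time its derivative `2 (y₁ - y₂)(y₁' - y₂')` is `≤ 0` by the one-sided
Lipschitz condition. By the fundamental theorem of calculus for absolutely continuous functions
it is therefore nonincreasing, and it vanishes at `0`.
-/

theorem LocallyLipschitzOn.absolutelyContinuousOnInterval {X : Type*} [PseudoMetricSpace X]
    {f : ℝ → X} {s : Set ℝ} {a b : ℝ} (hf : LocallyLipschitzOn s f) (hab : uIcc a b ⊆ s) :
    AbsolutelyContinuousOnInterval f a b := by
  obtain ⟨K, hK⟩ := (hf.mono hab).exists_lipschitzOnWith_of_compact isCompact_uIcc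
  exact hK.absolutelyContinuousOnInterval

theorem AbsolutelyContinuousOnInterval.antitoneOn_of_ae_deriv_nonpos {f : ℝ → ℝ} {a b : ℝ}
    (hf : AbsolutelyContinuousOnInterval f a b)
    (hf' : ∀ᵐ x, x ∈ Icc a b → deriv f x ≤ 0) : AntitoneOn f (Icc a b) := by
  intro x hx y hy hxy
  have hxy_sub : uIcc x y ⊆ uIcc a b := by
    rw [uIcc_of_le hxy]
    exact (Icc_subset_Icc hx.1 hy.2).trans Icc_subset_uIcc
  rw [← sub_nonpos, ← (hf.mono hxy_sub).integral_deriv_eq_sub, ← neg_nonneg,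
    ← intervalIntegral.integral_neg]
  refine intervalIntegral.integral_nonneg_of_ae_restrict hxy ?_
  rw [Filter.EventuallyLE, ae_restrict_iff' measurableSet_Icc]
  filter_upwards [hf'] with z hz hzxy
  exact neg_nonneg.2 (hz ⟨hx.1.trans hzxy.1, hzxy.2.trans hy.2⟩)

theorem deriv_sub_mul_self_nonpos {F : ℝ → Set ℝ}
    (hF : ∀ w₁ w₂ z₁ z₂ : ℝ, z₁ ∈ F w₁ → z₂ ∈ F w₂ → (z₁ - z₂) * (w₁ - w₂) ≤ 0)
    {y₁ y₂ : ℝ → ℝ} {t : ℝ} (hd₁ : ∃ z ∈ F (y₁ t), HasDerivAt y₁ z t)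
    (hd₂ : ∃ z ∈ F (y₂ t), HasDerivAt y₂ z t) :
    deriv (fun s ↦ (y₁ s - y₂ s) * (y₁ s - y₂ s)) t ≤ 0 := by
  obtain ⟨z₁, hz₁, hy₁⟩ := hd₁
  obtain ⟨z₂, hz₂, hy₂⟩ := hd₂
  have hsub := hy₁.fun_sub hy₂
  rw [(hsub.fun_mul hsub).deriv]
  nlinarith [hF _ _ _ _ hz₁ hz₂]

/-- uniqueness of solutions of a one-sided Lipschitz (with constant 0)
differential inclusion `y' ∈ F(y)` on `[0,∞)`: two locally Lipschitz solutions with the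
same initial value coincide on `[0,∞)`. -/
theorem di_osl_unique (F : ℝ → Set ℝ)
    (hF : ∀ w₁ w₂ z₁ z₂ : ℝ, z₁ ∈ F w₁ → z₂ ∈ F w₂ → (z₁ - z₂) * (w₁ - w₂) ≤ 0)
    (y₁ y₂ : ℝ → ℝ)
    (hy₁ : LocallyLipschitzOn (Set.Ici 0) y₁)
    (hy₂ : LocallyLipschitzOn (Set.Ici 0) y₂)
    (h0 : y₁ 0 = y₂ 0)
    (hd₁ : ∀ᵐ t ∂(volume.restrict (Set.Ici (0 : ℝ))), ∃ z ∈ F (y₁ t), HasDerivAt y₁ z t)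
    (hd₂ : ∀ᵐ t ∂(volume.restrict (Set.Ici (0 : ℝ))), ∃ z ∈ F (y₂ t), HasDerivAt y₂ z t) :
    ∀ t : ℝ, 0 ≤ t → y₁ t = y₂ t := by
  intro t ht
  have hsub : uIcc 0 t ⊆ Ici 0 := by
    rw [uIcc_of_le ht]
    exact Icc_subset_Ici_self
  have hac : AbsolutelyContinuousOnInterval (fun s ↦ (y₁ s - y₂ s) * (y₁ s - y₂ s)) 0 t := by
    have hdiff := (hy₁.absolutelyContinuousOnInterval hsub).sub
      (hy₂.absolutelyContinuousOnInterval hsub)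
    exact hdiff.mul hdiff
  have hderiv : ∀ᵐ s, s ∈ Icc 0 t → deriv (fun s ↦ (y₁ s - y₂ s) * (y₁ s - y₂ s)) s ≤ 0 := by
    rw [ae_restrict_iff' measurableSet_Ici] at hd₁ hd₂
    filter_upwards [hd₁, hd₂] with s hs₁ hs₂ hs
    exact deriv_sub_mul_self_nonpos hF (hs₁ hs.1) (hs₂ hs.1)
  have hmono := hac.antitoneOn_of_ae_deriv_nonpos hderiv
    (left_mem_Icc.2 ht) (right_mem_Icc.2 ht) ht
  simp only [h0, sub_self, mul_zero] at hmono
  nlinarith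
end

section
/- Explicit solution of the fluid-limit differential inclusion and its long-run limit: let λ > 0, θ ≥ 0, and let y₀ be a real with 0 ≤ y₀ ≤ θ. Define y(t) = min(λ + (y₀ − λ)·e^{−t}, θ) for t ≥ 0. Then y(0) = y₀, y is Lipschitz on [0,∞), for almost every t ≥ 0 the function y is differentiable at t with derivative lying in H(y(t)), and y(t) → min(λ, θ) as t → ∞. -/
open scoped Classical

open MeasureTheory

/-!
Let `f(t) = λ + (y₀ − λ)e^{−t}` be the solution of `f' = λ − f`, `f(0) = y₀`, so that
`y = min(f, θ)`. Near a time with `f(t) < θ` we have `y = f`, hence `y' = λ − y ∈ H(y)`; near a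
time with `f(t) > θ` we have `y ≡ θ`, hence `y' = 0`, and `0 ∈ H(θ)` because `f(t)` is a convex
combination of `y₀ ≤ θ` and `λ`, which forces `θ < λ`. Unless `f` is constant, it is injective,
so `f(t) = θ` only on a null set. Lipschitz continuity and the limit are inherited from `f`.
-/

namespace FluidLimit

variable {lam θ : ℝ}

theorem sub_mem_Hmap_of_lt {y : ℝ} (hy : y < θ) : lam - y ∈ Hmap lam θ y := by
  simp [Hmap, hy]

theorem zero_mem_Hmap_min (hθ : 0 ≤ θ) : (0 : ℝ) ∈ Hmap lam θ (min lam θ) := by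
  rcases lt_or_ge lam θ with h | h
  · simp [Hmap, min_eq_left h.le, h]
  · rw [min_eq_right h]
    simp only [Hmap, lt_irrefl, if_false, if_true]
    exact ⟨by linarith, by linarith⟩

theorem hasDerivAt_min_const_of_lt {f : ℝ → ℝ} {f' t : ℝ} (hf : HasDerivAt f f' t)
    (ht : f t < θ) : HasDerivAt (fun s => min (f s) θ) f' t := by
  refine hf.congr_of_eventuallyEq ?_
  filter_upwards [hf.continuousAt.eventually_lt continuousAt_const ht] with s hs
    using min_eq_left hs.le

theorem hasDerivAt_min_const_of_gt {f : ℝ → ℝ} {t : ℝ} (hf : ContinuousAt f t)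
    (ht : θ < f t) : HasDerivAt (fun s => min (f s) θ) 0 t := by
  refine (hasDerivAt_const t θ).congr_of_eventuallyEq ?_
  filter_upwards [continuousAt_const.eventually_lt hf ht] with s hs using min_eq_right hs.le

noncomputable def relaxation (lam y₀ t : ℝ) : ℝ := lam + (y₀ - lam) * Real.exp (-t)

variable {y₀ : ℝ}

@[simp]
theorem relaxation_zero : relaxation lam y₀ 0 = y₀ := by
  simp [relaxation]

theorem relaxation_self (t : ℝ) : relaxation lam lam t = lam := by
  simp [relaxation]

theorem hasDerivAt_relaxation (t : ℝ) :
    HasDerivAt (relaxation lam y₀) (lam - relaxation lam y₀ t) t := by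
  have hexp : HasDerivAt (fun s : ℝ => Real.exp (-s)) (-Real.exp (-t)) t := by
    simpa [Function.comp_def] using (Real.hasDerivAt_exp (-t)).comp t (hasDerivAt_neg t)
  exact ((hexp.const_mul (y₀ - lam)).const_add lam).congr_deriv (by simp only [relaxation]; ring)

theorem continuous_relaxation : Continuous (relaxation lam y₀) :=
  continuous_iff_continuousAt.2 fun t => (hasDerivAt_relaxation t).continuousAt

theorem relaxation_le_of_le {c t : ℝ} (hy₀ : y₀ ≤ c) (hlam : lam ≤ c) (ht : 0 ≤ t) :
    relaxation lam y₀ t ≤ c := by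
  have he : Real.exp (-t) ≤ 1 := Real.exp_le_one_iff.2 (neg_nonpos.2 ht)
  have hpos := Real.exp_pos (-t)
  have hcomb : relaxation lam y₀ t - c
      = Real.exp (-t) * (y₀ - c) + (1 - Real.exp (-t)) * (lam - c) := by
    simp only [relaxation]; ring
  linarith [mul_nonpos_of_nonneg_of_nonpos hpos.le (sub_nonpos.2 hy₀),
    mul_nonpos_of_nonneg_of_nonpos (sub_nonneg.2 he) (sub_nonpos.2 hlam)]

theorem injective_relaxation (h : y₀ ≠ lam) : Function.Injective (relaxation lam y₀) :=
  (add_right_injective lam).comp <|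
    (mul_right_injective₀ (sub_ne_zero.2 h)).comp (Real.exp_injective.comp neg_injective)

theorem lipschitzOnWith_relaxation :
    LipschitzOnWith ‖y₀ - lam‖₊ (relaxation lam y₀) (Set.Ici 0) := by
  refine (convex_Ici 0).lipschitzOnWith_of_nnnorm_hasDerivWithin_le
    (fun t _ => (hasDerivAt_relaxation t).hasDerivWithinAt) fun t ht => ?_
  have he : Real.exp (-t) ≤ 1 := Real.exp_le_one_iff.2 (neg_nonpos.2 ht)
  rw [← NNReal.coe_le_coe, coe_nnnorm, coe_nnnorm, Real.norm_eq_abs, Real.norm_eq_abs,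
    show lam - relaxation lam y₀ t = (y₀ - lam) * -Real.exp (-t) by simp only [relaxation]; ring,
    abs_mul, abs_neg, abs_of_pos (Real.exp_pos _)]
  exact mul_le_of_le_one_right (abs_nonneg _) he

theorem tendsto_relaxation_atTop :
    Filter.Tendsto (relaxation lam y₀) Filter.atTop (nhds lam) := by
  have h := (Real.tendsto_exp_neg_atTop_nhds_zero.const_mul (y₀ - lam)).const_add lam
  rwa [mul_zero, add_zero] at h

theorem exists_hasDerivAt_min_relaxation_mem_Hmap (hθ : 0 ≤ θ) (hy₀θ : y₀ ≤ θ) {t : ℝ}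
    (ht : 0 ≤ t) (hne : relaxation lam y₀ t ≠ θ) :
    ∃ z ∈ Hmap lam θ (min (relaxation lam y₀ t) θ),
      HasDerivAt (fun s => min (relaxation lam y₀ s) θ) z t := by
  rcases hne.lt_or_gt with hlt | hgt
  · refine ⟨lam - relaxation lam y₀ t, ?_, hasDerivAt_min_const_of_lt (hasDerivAt_relaxation t) hlt⟩
    rw [min_eq_left hlt.le]
    exact sub_mem_Hmap_of_lt hlt
  · have hθlam : θ ≤ lam := by
      by_contra! h
      exact hgt.not_ge (relaxation_le_of_le hy₀θ h.le ht)
    refine ⟨0, ?_, hasDerivAt_min_const_of_gt continuous_relaxation.continuousAt hgt⟩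
    rw [min_eq_right hgt.le]
    simpa [min_eq_right hθlam] using zero_mem_Hmap_min (lam := lam) hθ

theorem ae_exists_hasDerivAt_min_relaxation_mem_Hmap (hθ : 0 ≤ θ) (hy₀θ : y₀ ≤ θ) :
    ∀ᵐ t ∂(volume.restrict (Set.Ici (0 : ℝ))), ∃ z ∈ Hmap lam θ (min (relaxation lam y₀ t) θ),
      HasDerivAt (fun s => min (relaxation lam y₀ s) θ) z t := by
  rcases eq_or_ne y₀ lam with rfl | hne
  · simp only [relaxation_self]
    exact Filter.Eventually.of_forall fun t => ⟨0, zero_mem_Hmap_min hθ, hasDerivAt_const t _⟩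
  · have hnull : volume (relaxation lam y₀ ⁻¹' {θ}) = 0 :=
      (Set.subsingleton_singleton.preimage (injective_relaxation hne)).measure_zero _
    filter_upwards [ae_restrict_mem measurableSet_Ici,
      ae_restrict_of_ae (measure_eq_zero_iff_ae_notMem.1 hnull)] with t ht htθ
    exact exists_hasDerivAt_min_relaxation_mem_Hmap hθ hy₀θ ht htθ

end FluidLimit

open FluidLimit in
theorem fluid_limit_solution_general (lam θ : ℝ) (hθ : 0 ≤ θ)
    (y₀ : ℝ) (hy₀θ : y₀ ≤ θ)
    (y : ℝ → ℝ) (hy : ∀ t, y t = min (lam + (y₀ - lam) * Real.exp (-t)) θ) :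
    y 0 = y₀ ∧
    (∃ K : NNReal, LipschitzOnWith K y (Set.Ici 0)) ∧
    (∀ᵐ t ∂(volume.restrict (Set.Ici (0 : ℝ))), ∃ z ∈ Hmap lam θ (y t), HasDerivAt y z t) ∧
    Filter.Tendsto y Filter.atTop (nhds (min lam θ)) := by
  obtain rfl : y = fun t => min (relaxation lam y₀ t) θ := funext hy
  refine ⟨?_, ?_, ae_exists_hasDerivAt_min_relaxation_mem_Hmap hθ hy₀θ, ?_⟩
  · simpa using hy₀θ
  · exact ⟨_, (LipschitzWith.id.min_const θ).comp_lipschitzOnWith lipschitzOnWith_relaxation⟩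
  · exact tendsto_relaxation_atTop.min tendsto_const_nhds

/-- explicit solution of the fluid-limit differential inclusion and its
long-run limit: for `0 ≤ y₀ ≤ θ`, the function `y(t) = min(λ + (y₀ − λ)e^{−t}, θ)` starts
at `y₀`, is Lipschitz on `[0,∞)`, solves `y' ∈ H(y)` almost everywhere on `[0,∞)`, and
converges to `min(λ, θ)` as `t → ∞`. -/
theorem fluid_limit_solution (lam θ : ℝ) (hlam : 0 < lam) (hθ : 0 ≤ θ)
    (y₀ : ℝ) (hy₀0 : 0 ≤ y₀) (hy₀θ : y₀ ≤ θ)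
    (y : ℝ → ℝ) (hy : ∀ t, y t = min (lam + (y₀ - lam) * Real.exp (-t)) θ) :
    y 0 = y₀ ∧
    (∃ K : NNReal, LipschitzOnWith K y (Set.Ici 0)) ∧
    (∀ᵐ t ∂(volume.restrict (Set.Ici (0 : ℝ))), ∃ z ∈ Hmap lam θ (y t), HasDerivAt y z t) ∧
    Filter.Tendsto y Filter.atTop (nhds (min lam θ)) :=
  fluid_limit_solution_general lam θ hθ y₀ hy₀θ y hy
end
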